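/- arXiv:2206.04883 — 6 statements merged into one kernel-verified Lean document; each statement's English description precedes it below -/
import Mathlib

section
/- For a connected graph G on n vertices, the number of forests of G with exactly n−k edges (equivalently, spanning forests with exactly k connected components) is at most C(n−1, k−1) times the number of spanning trees of G. -/
/-!
Every forest `A` of a connected graph extends to a spanning tree `T ⊇ A`, and `A` is then one
of the `C(n-1, n-k)` subsets of `n-k` edges of `T`. Summing over spanning trees bounds the
number of forests with `n-k` edges by `C(n-1, n-k) = C(n-1, k-1)` times the number of trees.
-/

open SimpleGraph

namespace SimpleGraph

variable {V : Type*}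

lemma IsTree.ncard_edgeSet_add_one [Fintype V] {T : SimpleGraph V} (hT : T.IsTree) :
    T.edgeSet.ncard + 1 = Fintype.card V := by
  classical
  rw [← hT.card_edgeFinset, ← Set.ncard_coe_finset, coe_edgeFinset]

lemma ncard_setOf_le_ncard_edgeSet_eq_le_choose [Finite V] (T : SimpleGraph V) (m : ℕ) :
    {A : SimpleGraph V | A ≤ T ∧ A.edgeSet.ncard = m}.ncard ≤ T.edgeSet.ncard.choose m := by
  classical
  have := Fintype.ofFinite V
  calc _ ≤ (T.edgeFinset.powersetCard m : Set (Finset (Sym2 V))).ncard := by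
        refine Set.ncard_le_ncard_of_injOn (fun A => A.edgeFinset) ?_
          (fun A _ B _ h => edgeFinset_inj.1 h) (Finset.finite_toSet _)
        rintro A ⟨hAT, rfl⟩
        rw [Finset.mem_coe, Finset.mem_powersetCard, ← Set.ncard_coe_finset, coe_edgeFinset]
        exact ⟨edgeFinset_subset_edgeFinset.2 hAT, rfl⟩
    _ = _ := by
        rw [Set.ncard_coe_finset, Finset.card_powersetCard, ← Set.ncard_coe_finset,
          coe_edgeFinset]

theorem Connected.ncard_isAcyclic_ncard_edgeSet_eq_le [Fintype V] {G : SimpleGraph V}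
    (hG : G.Connected) (m : ℕ) :
    {A | A ≤ G ∧ A.IsAcyclic ∧ A.edgeSet.ncard = m}.ncard ≤
      (Fintype.card V - 1).choose m * {T | T ≤ G ∧ T.IsTree}.ncard := by
  classical
  set trees := {T | T ≤ G ∧ T.IsTree}
  have hcover : {A | A ≤ G ∧ A.IsAcyclic ∧ A.edgeSet.ncard = m} ⊆
      ⋃ T ∈ trees.toFinset, {A | A ≤ T ∧ A.edgeSet.ncard = m} := by
    rintro A ⟨hAG, hA, hcard⟩
    obtain ⟨T, hAT, hTG, hT⟩ := hG.exists_isTree_le_of_le_of_isAcyclic hAG hA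
    exact Set.mem_biUnion (Set.mem_toFinset.2 ⟨hTG, hT⟩) ⟨hAT, hcard⟩
  calc _ ≤ _ := Set.ncard_le_ncard hcover (Set.toFinite _)
    _ ≤ ∑ T ∈ trees.toFinset, {A | A ≤ T ∧ A.edgeSet.ncard = m}.ncard :=
        Finset.set_ncard_biUnion_le _ _
    _ ≤ ∑ _T ∈ trees.toFinset, (Fintype.card V - 1).choose m := by
        refine Finset.sum_le_sum fun T hT => ?_
        have hcard := (Set.mem_toFinset.1 hT).2.ncard_edgeSet_add_one
        exact (ncard_setOf_le_ncard_edgeSet_eq_le_choose T m).trans_eq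
          (by rw [← hcard, Nat.add_sub_cancel])
    _ = _ := by rw [Finset.sum_const, smul_eq_mul, mul_comm, Set.ncard_eq_toFinset_card']

lemma Subgraph.ncard_setOf_isSpanning_eq {G : SimpleGraph V} {P : G.Subgraph → Prop}
    {Q : SimpleGraph V → Prop}
    (hPQ : ∀ F : G.Subgraph, F.IsSpanning → (P F ↔ Q F.spanningCoe)) :
    {F : G.Subgraph | F.IsSpanning ∧ P F}.ncard = {H | H ≤ G ∧ Q H}.ncard := by
  refine Set.ncard_congr (fun F _ => F.spanningCoe) ?_ ?_ ?_
  · rintro F ⟨hF, hP⟩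
    exact ⟨F.spanningCoe_le, (hPQ F hF).1 hP⟩
  · rintro F₁ F₂ ⟨h₁, -⟩ ⟨h₂, -⟩ h
    exact Subgraph.ext (h₁.verts_eq_univ.trans h₂.verts_eq_univ.symm)
      (Subgraph.spanningCoe_inj.1 h)
  · rintro H ⟨hHG, hQ⟩
    have hH := toSubgraph.isSpanning H hHG
    exact ⟨toSubgraph H hHG, ⟨hH, (hPQ _ hH).2 hQ⟩, rfl⟩

end SimpleGraph

/-- For a connected graph `G` on `n` vertices, the number of spanning forests
of `G` with exactly `n - k` edges is at most `C(n-1, k-1)` times the number of spanning trees. -/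
theorem stmt0 {V : Type*} [Fintype V] (G : SimpleGraph V) (hG : G.Connected)
    (n k : ℕ) (hn : n = Fintype.card V) (hk1 : 1 ≤ k) (hkn : k ≤ n) :
    {F : G.Subgraph | F.IsSpanning ∧ F.coe.IsAcyclic ∧ F.edgeSet.ncard = n - k}.ncard ≤
      (n - 1).choose (k - 1) *
        {T : G.Subgraph | T.IsSpanning ∧ T.coe.IsTree}.ncard := by
  subst hn
  rw [Subgraph.ncard_setOf_isSpanning_eq (Q := fun A => A.IsAcyclic ∧ A.edgeSet.ncard = _)
      fun F hF => by rw [(F.spanningCoeEquivCoeOfSpanning hF).isAcyclic_iff, F.edgeSet_spanningCoe],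
    Subgraph.ncard_setOf_isSpanning_eq (Q := IsTree)
      fun F hF => (F.spanningCoeEquivCoeOfSpanning hF).isTree_iff.symm,
    ← Nat.choose_symm_of_eq_add (a := Fintype.card V - k) (by omega)]
  exact hG.ncard_isAcyclic_ncard_edgeSet_eq_le _
end

section
/- Let G be a connected graph and G' be obtained from G by adding a universal vertex s. Then the number of spanning trees of G' that contain exactly k edges incident to s equals the sum, over all spanning forests F of G with exactly k components, of the product of the component sizes of F. -/
/-!
A graph on `Option V` is the same as a graph `H` on `V` together with the set `S` of neighbours of
the apex `none`. It is a tree iff `H` is a forest and `S` contains exactly one vertex of each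
component of `H`: connectivity says that `S` meets every component, and acyclicity (every edge is
a bridge) that it meets none twice. Hence the spanning trees of the cone with `k` apex edges
correspond to the spanning forests of `G` with `k` components together with a choice of one vertex
in each component, and there are `∏ |Pᵢ|` such choices.
-/

open SimpleGraph

/-- The cone over a graph: add a new universal vertex `none` adjacent to every vertex of `G`. -/
def cone {V : Type*} (G : SimpleGraph V) : SimpleGraph (Option V) where
  Adj x y := x ≠ y ∧ ∀ u v : V, x = some u → y = some v → G.Adj u v
  symm := ⟨fun x y h => ⟨h.1.symm, fun u v hx hy => (h.2 v u hy hx).symm⟩⟩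
  loopless := ⟨fun x h => h.1 rfl⟩

noncomputable def bijOnUnivEquivPi {α ι : Type*} (π : α → ι) :
    {S : Set α // Set.BijOn π S Set.univ} ≃ ∀ i, {a // π a = i} where
  toFun S i := ⟨_, (S.2.surjOn (Set.mem_univ i)).choose_spec.2⟩
  invFun f := ⟨Set.range fun i => (f i).1, fun _ _ => trivial, by
      rintro _ ⟨i, rfl⟩ _ ⟨j, rfl⟩ h
      obtain rfl : i = j := (f i).2.symm.trans (h.trans (f j).2)
      rfl,
    fun i _ => ⟨(f i).1, ⟨i, rfl⟩, (f i).2⟩⟩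
  left_inv S := by
    ext a
    refine ⟨?_, fun ha => ⟨π a, ?_⟩⟩
    · rintro ⟨i, rfl⟩
      exact (S.2.surjOn (Set.mem_univ i)).choose_spec.1
    · have hchoose := (S.2.surjOn (Set.mem_univ (π a))).choose_spec
      exact S.2.injOn hchoose.1 ha hchoose.2
  right_inv f := by
    funext i
    apply Subtype.ext
    dsimp only
    generalize_proofs h
    obtain ⟨⟨j, hj⟩, hi⟩ := h.choose_spec
    rw [← hj] at hi ⊢
    rw [(f j).2] at hi
    subst hi
    rfl

theorem ncard_setOf_prod_eq_finsum {α β : Type*} [Finite α] [Finite β] (A : Set α)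
    (B : α → Set β) :
    {p : α × β | p.1 ∈ A ∧ p.2 ∈ B p.1}.ncard = ∑ᶠ a ∈ A, (B a).ncard := by
  have := Fintype.ofFinite A
  let e : {p : α × β | p.1 ∈ A ∧ p.2 ∈ B p.1} ≃ Σ a : A, B a :=
    { toFun p := ⟨⟨p.1.1, p.2.1⟩, p.1.2, p.2.2⟩
      invFun x := ⟨(x.1, x.2), x.1.2, x.2.2⟩ }
  rw [← Nat.card_coe_set_eq, Nat.card_congr e, Nat.card_sigma, ← finsum_set_coe_eq_finsum_mem,
    finsum_eq_sum_of_fintype]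
  simp only [Nat.card_coe_set_eq]

namespace SimpleGraph

variable {V : Type*} (H : SimpleGraph V) (S : Set V)

def addApex : SimpleGraph (Option V) where
  Adj
    | some u, some v => H.Adj u v
    | none, some v => v ∈ S
    | some u, none => u ∈ S
    | none, none => False
  symm := ⟨by
    rintro (_ | u) (_ | v) h
    exacts [h, h, h, H.adj_symm h]⟩
  loopless := ⟨by
    rintro (_ | u) h
    exacts [h, H.loopless.irrefl u h]⟩

variable {H S}

@[simp] lemma addApex_adj_some_some {u v : V} : (H.addApex S).Adj (some u) (some v) ↔ H.Adj u v :=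
  .rfl

@[simp] lemma addApex_adj_none_some {v : V} : (H.addApex S).Adj none (some v) ↔ v ∈ S := .rfl

@[simp] lemma addApex_adj_some_none {v : V} : (H.addApex S).Adj (some v) none ↔ v ∈ S := .rfl

@[simp] lemma not_addApex_adj_none_none : ¬ (H.addApex S).Adj none none := id

variable (H S) in
def addApexEmbedding : H ↪g H.addApex S where
  toEmbedding := ⟨some, Option.some_injective V⟩
  map_rel_iff' := .rfl

lemma reachable_of_addApex_walk {x y : Option V} (p : (H.addApex S).Walk x y)
    (hp : none ∉ p.support) {u v : V} (hu : x = some u) (hv : y = some v) : H.Reachable u v := by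
  induction p generalizing u with
  | nil =>
    cases hu.symm.trans hv
    rfl
  | @cons _ w _ hadj p ih =>
    subst hu
    cases w with
    | none => simp at hp
    | some w =>
      rw [Walk.support_cons, List.mem_cons, not_or] at hp
      exact (addApex_adj_some_some.mp hadj).reachable.trans (ih hp.2 rfl hv)

lemma exists_mem_reachable_of_addApex_path {v : V} {p : (H.addApex S).Walk none (some v)}
    (hp : p.IsPath) : ∃ s ∈ S, H.Reachable s v := by
  cases p with
  | @cons _ w _ hadj q =>
    rw [Walk.cons_isPath_iff] at hp
    cases w with
    | none => exact (not_addApex_adj_none_none hadj).elim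
    | some s => exact ⟨s, hadj, reachable_of_addApex_walk q hp.2 rfl rfl⟩

lemma addApex_deleteEdges_none_some (s : V) :
    (H.addApex S).deleteEdges {s(none, some s)} = H.addApex (S \ {s}) := by
  ext (_ | u) (_ | v) <;> simp [and_comm]

lemma addApex_deleteEdges_some_some (u v : V) :
    (H.addApex S).deleteEdges {s(some u, some v)} = (H.deleteEdges {s(u, v)}).addApex S := by
  ext (_ | x) (_ | y) <;> simp

theorem connected_addApex_iff :
    (H.addApex S).Connected ↔ Set.SurjOn H.connectedComponentMk S Set.univ := by
  constructor
  · intro h c _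
    induction c using ConnectedComponent.ind with | h v =>
    obtain ⟨p, hp⟩ := (h.preconnected none (some v)).exists_isPath
    obtain ⟨s, hs, hsv⟩ := exists_mem_reachable_of_addApex_path hp
    exact ⟨s, hs, ConnectedComponent.eq.mpr hsv⟩
  · intro h
    refine connected_iff_exists_forall_reachable _ |>.mpr ⟨none, ?_⟩
    rintro (_ | v)
    · rfl
    · obtain ⟨s, hs, hsv⟩ := h (Set.mem_univ (H.connectedComponentMk v))
      exact (addApex_adj_none_some.mpr hs).reachable.trans
        ((ConnectedComponent.eq.mp hsv).map (addApexEmbedding H S).toHom)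

lemma isBridge_addApex_none_some (hS : S.InjOn H.connectedComponentMk) {s : V} (hs : s ∈ S) :
    (H.addApex S).IsBridge s(none, some s) := by
  rw [isBridge_iff, addApex_deleteEdges_none_some]
  intro hreach
  obtain ⟨p, hp⟩ := hreach.exists_isPath
  obtain ⟨t, ⟨ht, hts⟩, hts'⟩ := exists_mem_reachable_of_addApex_path hp
  exact hts (hS ht hs (ConnectedComponent.eq.mpr hts'))

/- A path from `u` to `v` avoiding the edge `uv` either stays in `H`, or passes through the apex,
entering and leaving it from the components of `u` and `v`; these must then be the same. -/
lemma isBridge_addApex_some_some (hH : H.IsAcyclic) (hS : S.InjOn H.connectedComponentMk)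
    {u v : V} (hadj : H.Adj u v) : (H.addApex S).IsBridge s(some u, some v) := by
  classical
  have hbridge := isBridge_iff.mp (isAcyclic_iff_forall_adj_isBridge.mp hH hadj)
  rw [isBridge_iff, addApex_deleteEdges_some_some]
  intro hreach
  obtain ⟨p, hp⟩ := hreach.exists_isPath
  by_cases hnone : none ∈ p.support
  · obtain ⟨s, hs, hsu⟩ := exists_mem_reachable_of_addApex_path (hp.takeUntil hnone).reverse
    obtain ⟨t, ht, htv⟩ := exists_mem_reachable_of_addApex_path (hp.dropUntil hnone)
    obtain rfl : s = t := hS hs ht <| ConnectedComponent.eq.mpr <|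
      (hsu.mono (deleteEdges_le _)).trans <| hadj.reachable.trans (htv.mono (deleteEdges_le _)).symm
    exact hbridge (hsu.symm.trans htv)
  · exact hbridge (reachable_of_addApex_walk p hnone rfl rfl)

theorem isAcyclic_addApex_iff :
    (H.addApex S).IsAcyclic ↔ H.IsAcyclic ∧ S.InjOn H.connectedComponentMk := by
  constructor
  · intro h
    refine ⟨h.embedding (addApexEmbedding H S), fun s hs t ht hst => by_contra fun hne => ?_⟩
    have hbridge := isAcyclic_iff_forall_adj_isBridge.mp h (addApex_adj_none_some.mpr hs)
    rw [isBridge_iff, addApex_deleteEdges_none_some] at hbridge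
    have hadj : (H.addApex (S \ {s})).Adj none (some t) := ⟨ht, Ne.symm hne⟩
    exact hbridge <| hadj.reachable.trans
      ((ConnectedComponent.eq.mp hst).symm.map (addApexEmbedding H _).toHom)
  · rintro ⟨hH, hS⟩
    rw [isAcyclic_iff_forall_adj_isBridge]
    rintro (_ | u) (_ | v) hadj
    · exact (not_addApex_adj_none_none hadj).elim
    · exact isBridge_addApex_none_some hS hadj
    · exact Sym2.eq_swap ▸ isBridge_addApex_none_some hS hadj
    · exact isBridge_addApex_some_some hH hS hadj

theorem isTree_addApex_iff :
    (H.addApex S).IsTree ↔ H.IsAcyclic ∧ Set.BijOn H.connectedComponentMk S Set.univ := by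
  rw [isTree_iff, connected_addApex_iff, isAcyclic_addApex_iff, Set.BijOn]
  simp only [Set.mapsTo_univ, true_and]
  tauto

variable (V) in
def addApexEquiv : SimpleGraph V × Set V ≃ SimpleGraph (Option V) where
  toFun p := p.1.addApex p.2
  invFun K := (K.comap some, {v | K.Adj none (some v)})
  left_inv _ := rfl
  right_inv K := by
    ext (_ | u) (_ | v)
    · simp
    · rfl
    · exact K.adj_comm _ _
    · rfl

@[simp] lemma addApexEquiv_apply (p : SimpleGraph V × Set V) :
    addApexEquiv V p = p.1.addApex p.2 := rfl

lemma addApex_le_addApex_iff {H' : SimpleGraph V} {S' : Set V} :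
    H.addApex S ≤ H'.addApex S' ↔ H ≤ H' ∧ S ⊆ S' := by
  refine ⟨fun h => ⟨fun u v huv => h (addApex_adj_some_some.mpr huv),
    fun v hv => h (addApex_adj_none_some.mpr hv)⟩, ?_⟩
  rintro ⟨hH, hS⟩ (_ | u) (_ | v) huv
  exacts [huv.elim, hS huv, hS huv, hH huv]

theorem ncard_isTree_le_addApex_univ [Finite V] (G : SimpleGraph V) (k : ℕ) :
    {K : SimpleGraph (Option V) | K ≤ G.addApex Set.univ ∧ K.IsTree ∧
        {v | K.Adj none (some v)}.ncard = k}.ncard =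
      ∑ᶠ H ∈ {H : SimpleGraph V | H ≤ G ∧ H.IsAcyclic ∧ Nat.card H.ConnectedComponent = k},
        ∏ᶠ c : H.ConnectedComponent, Nat.card c.supp := by
  classical
  have hpairs : addApexEquiv V ⁻¹' {K | K ≤ G.addApex Set.univ ∧ K.IsTree ∧
      {v | K.Adj none (some v)}.ncard = k} =
      {p | p.1 ∈ {H | H ≤ G ∧ H.IsAcyclic ∧ Nat.card H.ConnectedComponent = k} ∧
        p.2 ∈ {S | Set.BijOn p.1.connectedComponentMk S Set.univ}} := by
    ext ⟨H, S⟩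
    simp only [Set.mem_preimage, Set.mem_ofPred_eq, addApexEquiv_apply, addApex_le_addApex_iff,
      Set.subset_univ, and_true, isTree_addApex_iff, addApex_adj_none_some, Set.ofPred_mem_eq]
    constructor
    · rintro ⟨hle, ⟨hH, hS⟩, rfl⟩
      exact ⟨⟨hle, hH, (hS.ncard_eq.trans (Set.ncard_univ _)).symm⟩, hS⟩
    · rintro ⟨⟨hle, hH, rfl⟩, hS⟩
      exact ⟨hle, ⟨hH, hS⟩, hS.ncard_eq.trans (Set.ncard_univ _)⟩
  rw [← Set.ncard_preimage_of_injective_subset_range (addApexEquiv V).injective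
    (by simp [(addApexEquiv V).surjective.range_eq]), hpairs,
    ncard_setOf_prod_eq_finsum
      (B := fun H : SimpleGraph V => {S | Set.BijOn H.connectedComponentMk S Set.univ})]
  refine finsum_mem_congr rfl fun H _ => ?_
  have := Fintype.ofFinite H.ConnectedComponent
  rw [← Nat.card_coe_set_eq, finprod_eq_prod_of_fintype]
  exact (Nat.card_congr (bijOnUnivEquivPi H.connectedComponentMk)).trans (Nat.card_pi ..)

lemma cone_eq_addApex_univ (G : SimpleGraph V) : cone G = G.addApex Set.univ := by
  ext (_ | u) (_ | v) <;> simp +contextual [cone, G.ne_of_adj]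

variable {W W' : Type*} {G : SimpleGraph W} {G' : SimpleGraph W'}

lemma Iso.finprod_natCard_supp (φ : G ≃g G') :
    ∏ᶠ c : G.ConnectedComponent, Nat.card c.supp = ∏ᶠ c : G'.ConnectedComponent, Nat.card c.supp :=
  (finprod_congr fun c => Nat.card_congr (ConnectedComponent.isoEquivSupp φ c)).trans
    (finprod_comp_equiv (f := fun c : G'.ConnectedComponent => Nat.card c.supp)
      φ.connectedComponentEquiv)

namespace Subgraph

lemma injOn_spanningCoe : {F : G.Subgraph | F.IsSpanning}.InjOn Subgraph.spanningCoe :=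
  fun _ hF _ hF' h =>
    Subgraph.ext (hF.verts_eq_univ.trans hF'.verts_eq_univ.symm) (spanningCoe_inj.mp h)

lemma image_spanningCoe_setOf_isSpanning (P : SimpleGraph W → Prop) :
    Subgraph.spanningCoe '' {F : G.Subgraph | F.IsSpanning ∧ P F.spanningCoe} =
      {H | H ≤ G ∧ P H} := by
  ext H
  constructor
  · rintro ⟨F, ⟨-, hP⟩, rfl⟩
    exact ⟨F.spanningCoe_le, hP⟩
  · rintro ⟨hle, hP⟩
    exact ⟨SimpleGraph.toSubgraph H hle, ⟨Set.mem_univ, hP⟩, rfl⟩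

lemma ncard_setOf_isSpanning (P : SimpleGraph W → Prop) :
    {F : G.Subgraph | F.IsSpanning ∧ P F.spanningCoe}.ncard = {H | H ≤ G ∧ P H}.ncard := by
  rw [← image_spanningCoe_setOf_isSpanning, (injOn_spanningCoe.mono fun _ hF => hF.1).ncard_image]

lemma finsum_mem_setOf_isSpanning {M : Type*} [AddCommMonoid M] (P : SimpleGraph W → Prop)
    (f : SimpleGraph W → M) :
    ∑ᶠ F ∈ {F : G.Subgraph | F.IsSpanning ∧ P F.spanningCoe}, f F.spanningCoe =
      ∑ᶠ H ∈ {H | H ≤ G ∧ P H}, f H := by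
  rw [← image_spanningCoe_setOf_isSpanning,
    finsum_mem_image (injOn_spanningCoe.mono fun _ hF => hF.1)]

end Subgraph

end SimpleGraph

theorem stmt5_general {V : Type*} [Fintype V] (G : SimpleGraph V) (k : ℕ) :
    {T : (cone G).Subgraph | T.IsSpanning ∧ T.coe.IsTree ∧
        {v : V | T.Adj none (some v)}.ncard = k}.ncard =
      ∑ᶠ F ∈ {F : G.Subgraph | F.IsSpanning ∧ F.coe.IsAcyclic ∧
          Nat.card F.coe.ConnectedComponent = k},
        ∏ᶠ cc : F.coe.ConnectedComponent,
          Nat.card {v : F.verts // F.coe.connectedComponentMk v = cc} :=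
  calc _ = {T : (cone G).Subgraph | T.IsSpanning ∧ (T.spanningCoe.IsTree ∧
          {v : V | T.spanningCoe.Adj none (some v)}.ncard = k)}.ncard := by
        congr 1
        ext T
        exact and_congr_right fun hT =>
          (T.spanningCoeEquivCoeOfSpanning hT).isTree_iff.symm.and .rfl
    _ = ∑ᶠ H ∈ {H : SimpleGraph V | H ≤ G ∧ H.IsAcyclic ∧ Nat.card H.ConnectedComponent = k},
          ∏ᶠ c : H.ConnectedComponent, Nat.card c.supp := by
        rw [Subgraph.ncard_setOf_isSpanning fun K => K.IsTree ∧ {v | K.Adj none (some v)}.ncard = k,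
          cone_eq_addApex_univ, ncard_isTree_le_addApex_univ]
    _ = ∑ᶠ F ∈ {F : G.Subgraph | F.IsSpanning ∧ (F.spanningCoe.IsAcyclic ∧
          Nat.card F.spanningCoe.ConnectedComponent = k)},
          ∏ᶠ c : F.spanningCoe.ConnectedComponent, Nat.card c.supp :=
        (Subgraph.finsum_mem_setOf_isSpanning _
          fun H => ∏ᶠ c : H.ConnectedComponent, Nat.card c.supp).symm
    _ = _ := by
      refine finsum_mem_congr (Set.ext fun F => and_congr_right fun hF => ?_) fun F hF =>
        (F.spanningCoeEquivCoeOfSpanning hF.1).finprod_natCard_supp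
      have φ := F.spanningCoeEquivCoeOfSpanning hF
      rw [φ.isAcyclic_iff, Nat.card_congr φ.connectedComponentEquiv]

/-- the number of spanning trees of the cone `G'` over a connected graph `G`
containing exactly `k` edges incident to the apex equals the sum, over spanning forests `F`
of `G` with exactly `k` components, of the product of the component sizes of `F`. -/
theorem stmt5 {V : Type*} [Fintype V] (G : SimpleGraph V) (hG : G.Connected)
    (n k : ℕ) (hn : n = Fintype.card V) (hk1 : 1 ≤ k) (hkn : k ≤ n) :
    {T : (cone G).Subgraph | T.IsSpanning ∧ T.coe.IsTree ∧
        {v : V | T.Adj none (some v)}.ncard = k}.ncard =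
      ∑ᶠ F ∈ {F : G.Subgraph | F.IsSpanning ∧ F.coe.IsAcyclic ∧
          Nat.card F.coe.ConnectedComponent = k},
        ∏ᶠ cc : F.coe.ConnectedComponent,
          Nat.card {v : F.verts // F.coe.connectedComponentMk v = cc} :=
  stmt5_general G k
end

section
/- For any reversible ergodic Markov chain P on a finite state space with stationary distribution μ, and any set S with μ(S) ≤ 1/2, the mixing time (to total variation distance 1/4) is at least 1/(4Φ(S)), where Φ(S) = Q(S, Sᶜ)/μ(S) and Q(S,Sᶜ) = Σ_{x∈S, y∉S} μ(x)P(x,y). -/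
/-!
Started in a set `S`, a chain at stationarity leaks at most `Q(S, Sᶜ)` of mass into `Sᶜ` per
step, so after `t` steps at most `t Q(S, Sᶜ)` of the mass `μ(S)` has left `S`. On the other hand,
if `Pᵗ(x, ·)` is `1/4`-close to `μ` in total variation, it puts mass at least
`μ(Sᶜ) - 1/4 ≥ 1/4` on `Sᶜ`, so at least `μ(S)/4` has left. Hence `μ(S)/4 ≤ t Q(S, Sᶜ)`.
-/

open Finset Matrix

noncomputable section

variable {Ω : Type*} [Fintype Ω]

def edgeMeasure (μ : Ω → ℝ) (P : Matrix Ω Ω ℝ) (A B : Finset Ω) : ℝ :=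
  ∑ x ∈ A, ∑ y ∈ B, μ x * P x y

variable [DecidableEq Ω]

lemma sum_sub_sum_le_half_sum_abs_sub {p q : Ω → ℝ} (hpq : ∑ x, p x = ∑ x, q x)
    (A : Finset Ω) :
    ∑ x ∈ A, q x - ∑ x ∈ A, p x ≤ 1 / 2 * ∑ x, |p x - q x| := by
  have hA : ∑ x ∈ A, (q x - p x) ≤ ∑ x ∈ A, |p x - q x| :=
    sum_le_sum fun x _ => by rw [abs_sub_comm]; exact le_abs_self _
  have hAc : ∑ x ∈ Aᶜ, (p x - q x) ≤ ∑ x ∈ Aᶜ, |p x - q x| :=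
    sum_le_sum fun x _ => le_abs_self _
  have hsplit_p := sum_add_sum_compl A p
  have hsplit_q := sum_add_sum_compl A q
  have hsplit_abs := sum_add_sum_compl A fun x => |p x - q x|
  simp only [sum_sub_distrib] at hA hAc
  linarith

lemma quarter_le_sum_compl_of_half_sum_abs_sub_le {p μ : Ω → ℝ}
    (hp : ∑ x, p x = 1) (hμ : ∑ x, μ x = 1) {S : Finset Ω} (hS : ∑ x ∈ S, μ x ≤ 1 / 2)
    (hpμ : 1 / 2 * ∑ x, |p x - μ x| ≤ 1 / 4) :
    1 / 4 ≤ ∑ y ∈ Sᶜ, p y := by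
  have hclose := sum_sub_sum_le_half_sum_abs_sub (hp.trans hμ.symm) Sᶜ
  have hsplit := sum_add_sum_compl S μ
  linarith

lemma edgeMeasure_one_compl (μ : Ω → ℝ) (S : Finset Ω) : edgeMeasure μ 1 S Sᶜ = 0 :=
  sum_eq_zero fun x hx => sum_eq_zero fun y hy => by
    rw [one_apply_ne (ne_of_mem_of_not_mem hx (mem_compl.mp hy)), mul_zero]

/-- By stationarity, what the first step keeps inside `S` has mass at most `μ` there, so the
second step moves at most `Q_R(S, Sᶜ)` out of `S`. -/
lemma edgeMeasure_mul_compl_le {μ : Ω → ℝ} {P R : Matrix Ω Ω ℝ} (hμ : ∀ x, 0 ≤ μ x)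
    (hP : ∀ x y, 0 ≤ P x y) (hμP : μ ᵥ* P = μ) (hR : R ∈ rowStochastic ℝ Ω) (S : Finset Ω) :
    edgeMeasure μ (P * R) S Sᶜ ≤ edgeMeasure μ P S Sᶜ + edgeMeasure μ R S Sᶜ := by
  set out : Ω → ℝ := fun z => ∑ y ∈ Sᶜ, R z y
  have hout_nonneg : ∀ z, 0 ≤ out z := fun z => sum_nonneg fun y _ => hR.1 z y
  have hout_le_one : ∀ z, out z ≤ 1 := fun z => by
    rw [← sum_row_of_mem_rowStochastic hR z]
    exact sum_le_sum_of_subset_of_nonneg (subset_univ _) fun y _ _ => hR.1 z y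
  have hstay : ∀ z, ∑ x ∈ S, μ x * P x z ≤ μ z := fun z => by
    conv_rhs => rw [← hμP]
    exact sum_le_sum_of_subset_of_nonneg (subset_univ _) fun x _ _ => mul_nonneg (hμ x) (hP x z)
  calc edgeMeasure μ (P * R) S Sᶜ
      = ∑ x ∈ S, ∑ z, μ x * P x z * out z := by
        simp only [edgeMeasure, mul_apply, out, mul_sum, mul_assoc]
        exact sum_congr rfl fun x _ => sum_comm
    _ = ∑ z ∈ S, (∑ x ∈ S, μ x * P x z) * out z
          + ∑ x ∈ S, ∑ z ∈ Sᶜ, μ x * P x z * out z := by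
        simp only [← sum_add_sum_compl S, sum_add_distrib, sum_mul]
        rw [sum_comm]
    _ ≤ ∑ z ∈ S, μ z * out z + ∑ x ∈ S, ∑ z ∈ Sᶜ, μ x * P x z := by
        refine add_le_add (sum_le_sum fun z _ => ?_)
          (sum_le_sum fun x _ => sum_le_sum fun z _ => ?_)
        · exact mul_le_mul_of_nonneg_right (hstay z) (hout_nonneg z)
        · exact mul_le_of_le_one_right (mul_nonneg (hμ x) (hP x z)) (hout_le_one z)
    _ = edgeMeasure μ P S Sᶜ + edgeMeasure μ R S Sᶜ := by
        simp only [edgeMeasure, out, mul_sum]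
        exact add_comm _ _

lemma edgeMeasure_pow_compl_le {μ : Ω → ℝ} {P : Matrix Ω Ω ℝ} (hμ : ∀ x, 0 ≤ μ x)
    (hP : P ∈ rowStochastic ℝ Ω) (hμP : μ ᵥ* P = μ) (S : Finset Ω) (n : ℕ) :
    edgeMeasure μ (P ^ n) S Sᶜ ≤ n * edgeMeasure μ P S Sᶜ := by
  induction n with
  | zero => simp [edgeMeasure_one_compl]
  | succ n ih =>
    calc edgeMeasure μ (P ^ (n + 1)) S Sᶜ
        ≤ edgeMeasure μ P S Sᶜ + edgeMeasure μ (P ^ n) S Sᶜ := by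
          rw [pow_succ']
          exact edgeMeasure_mul_compl_le hμ hP.1 hμP (pow_mem hP n) S
      _ ≤ (n + 1 : ℕ) * edgeMeasure μ P S Sᶜ := by push_cast; linarith

end

theorem stmt6_general {Ω : Type*} [Fintype Ω] [DecidableEq Ω]
    (P : Matrix Ω Ω ℝ) (μ : Ω → ℝ)
    (hPnn : ∀ x y, 0 ≤ P x y) (hProw : ∀ x, ∑ y, P x y = 1)
    (hμnn : ∀ x, 0 ≤ μ x) (hμsum : ∑ x, μ x = 1)
    (hstat : ∀ y, ∑ x, μ x * P x y = μ y)
    (S : Finset Ω) (hS : ∑ x ∈ S, μ x ≤ 1 / 2)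
    (t : ℕ) (hmix : ∀ x, (1 / 2) * ∑ z, |(P ^ t) x z - μ z| ≤ 1 / 4) :
    1 / (4 * ((∑ x ∈ S, ∑ y ∈ Sᶜ, μ x * P x y) / ∑ x ∈ S, μ x)) ≤ (t : ℝ) := by
  have hP : P ∈ rowStochastic ℝ Ω := mem_rowStochastic_iff_sum.mpr ⟨hPnn, hProw⟩
  have hPt := pow_mem hP t
  have hescape : (∑ x ∈ S, μ x) / 4 ≤ edgeMeasure μ (P ^ t) S Sᶜ :=
    calc (∑ x ∈ S, μ x) / 4 = ∑ x ∈ S, μ x * (1 / 4) := by rw [← sum_mul]; ring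
      _ ≤ ∑ x ∈ S, μ x * ∑ y ∈ Sᶜ, (P ^ t) x y := sum_le_sum fun x _ =>
          mul_le_mul_of_nonneg_left (quarter_le_sum_compl_of_half_sum_abs_sub_le
            (sum_row_of_mem_rowStochastic hPt x) hμsum hS (hmix x)) (hμnn x)
      _ = edgeMeasure μ (P ^ t) S Sᶜ := by simp only [edgeMeasure, mul_sum]
  have hflow := edgeMeasure_pow_compl_le hμnn hP (funext hstat) S t
  have hQ : 0 ≤ edgeMeasure μ P S Sᶜ :=
    sum_nonneg fun x _ => sum_nonneg fun y _ => mul_nonneg (hμnn x) (hPnn x y)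
  change 1 / (4 * (edgeMeasure μ P S Sᶜ / ∑ x ∈ S, μ x)) ≤ (t : ℝ)
  rw [mul_div_assoc', one_div_div]
  exact div_le_of_le_mul₀ (by positivity) t.cast_nonneg (by linarith)

/-- conductance lower bound on mixing time. For a reversible ergodic chain `P`
with stationary distribution `μ` and any `S` with `μ(S) ≤ 1/2`, any time `t` at which the
chain is within total-variation distance `1/4` of `μ` from every start satisfies
`t ≥ 1/(4 Φ(S))` where `Φ(S) = Q(S, Sᶜ)/μ(S)`. -/
theorem stmt6 {Ω : Type*} [Fintype Ω] [Nonempty Ω] [DecidableEq Ω]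
    (P : Matrix Ω Ω ℝ) (μ : Ω → ℝ)
    (hPnn : ∀ x y, 0 ≤ P x y) (hProw : ∀ x, ∑ y, P x y = 1)
    (hμnn : ∀ x, 0 ≤ μ x) (hμsum : ∑ x, μ x = 1)
    (hstat : ∀ y, ∑ x, μ x * P x y = μ y)
    (hrev : ∀ x y, μ x * P x y = μ y * P y x)
    (herg : ∃ t : ℕ, ∀ x y, 0 < (P ^ t) x y)
    (S : Finset Ω) (hS : ∑ x ∈ S, μ x ≤ 1 / 2)
    (t : ℕ) (hmix : ∀ x, (1 / 2) * ∑ z, |(P ^ t) x z - μ z| ≤ 1 / 4) :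
    1 / (4 * ((∑ x ∈ S, ∑ y ∈ Sᶜ, μ x * P x y) / ∑ x ∈ S, μ x)) ≤ (t : ℝ) :=
  stmt6_general P μ hPnn hProw hμnn hμsum hstat S hS t hmix
end

section
/- Let P and P' be two reversible Markov chains on the same finite state space with stationary distributions π and π'. Suppose for some constant A ≥ 1 we have π(x)P(x,y) ≥ A^{-1} π'(x)P'(x,y) for all x ≠ y, and π(x) ≤ A π'(x) for all x. Then the Poincaré constant (spectral gap) satisfies gap(P) ≥ A^{-2} gap(P'). -/
/-- The Dirichlet form `E_P(f,f) = (1/2) Σ_{x,y} π(x) P(x,y) (f(x) - f(y))²`. -/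
noncomputable def dirichletForm {Ω : Type*} [Fintype Ω] (π : Ω → ℝ) (P : Matrix Ω Ω ℝ)
    (f : Ω → ℝ) : ℝ :=
  (1 / 2) * ∑ x, ∑ y, π x * P x y * (f x - f y) ^ 2

/-- The variance `Var_π(f) = E_π[f²] - (E_π[f])²`. -/
noncomputable def variance {Ω : Type*} [Fintype Ω] (π : Ω → ℝ) (f : Ω → ℝ) : ℝ :=
  ∑ x, π x * f x ^ 2 - (∑ x, π x * f x) ^ 2

/-- The Poincaré constant (spectral gap): infimum of `E_P(f,f)/Var_π(f)` over nonconstant `f`. -/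
noncomputable def specGap {Ω : Type*} [Fintype Ω] (π : Ω → ℝ) (P : Matrix Ω Ω ℝ) : ℝ :=
  sInf {r : ℝ | ∃ f : Ω → ℝ, variance π f ≠ 0 ∧ r = dirichletForm π P f / variance π f}

/-! The variance only improves when `π` is replaced by `π' ≥ π / A`, and the Dirichlet form only
worsens by the factor `A` when the off-diagonal flows `π(x)P(x,y)` shrink by at most `A`, so every
Rayleigh quotient `E_P(f,f) / Var_π(f)` is at least `A⁻²` times the corresponding one for `P'`.
In the degenerate case where `π` is a point mass every variance vanishes and both gaps are `0`:
reversibility forces all off-diagonal flows of `P`, hence of `P'`, to vanish. -/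

section

open Finset

variable {Ω : Type*} [Fintype Ω] {π π' : Ω → ℝ} {P P' : Matrix Ω Ω ℝ}

lemma sum_mul_sub_sq_eq_variance_add (hπsum : ∑ x, π x = 1) (f : Ω → ℝ) (c : ℝ) :
    ∑ x, π x * (f x - c) ^ 2 = variance π f + (∑ x, π x * f x - c) ^ 2 := by
  have expand : ∑ x, π x * (f x - c) ^ 2
      = ∑ x, (π x * f x ^ 2 - 2 * c * (π x * f x) + c ^ 2 * π x) :=
    sum_congr rfl fun x _ ↦ by ring
  rw [expand, sum_add_distrib, sum_sub_distrib, ← mul_sum, ← mul_sum, hπsum, variance]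
  ring

lemma variance_le_sum_mul_sub_sq (hπsum : ∑ x, π x = 1) (f : Ω → ℝ) (c : ℝ) :
    variance π f ≤ ∑ x, π x * (f x - c) ^ 2 := by
  rw [sum_mul_sub_sq_eq_variance_add hπsum]
  exact le_add_of_nonneg_right (sq_nonneg _)

lemma variance_nonneg (hπnn : ∀ x, 0 ≤ π x) (hπsum : ∑ x, π x = 1) (f : Ω → ℝ) :
    0 ≤ variance π f := by
  have h := sum_mul_sub_sq_eq_variance_add hπsum f (∑ x, π x * f x)
  rw [sub_self, sq, mul_zero, add_zero] at h
  exact h ▸ sum_nonneg fun x _ ↦ mul_nonneg (hπnn x) (sq_nonneg _)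

lemma variance_le_mul_variance (hπsum : ∑ x, π x = 1) (hπ'sum : ∑ x, π' x = 1) {A : ℝ}
    (hmass : ∀ x, π x ≤ A * π' x) (f : Ω → ℝ) :
    variance π f ≤ A * variance π' f := by
  set c := ∑ x, π' x * f x
  calc variance π f ≤ ∑ x, π x * (f x - c) ^ 2 := variance_le_sum_mul_sub_sq hπsum f c
    _ ≤ ∑ x, A * π' x * (f x - c) ^ 2 :=
      sum_le_sum fun x _ ↦ mul_le_mul_of_nonneg_right (hmass x) (sq_nonneg _)
    _ = A * variance π' f := by
      simp_rw [mul_assoc, ← mul_sum, sum_mul_sub_sq_eq_variance_add hπ'sum, c, sub_self]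
      ring

lemma dirichletForm_nonneg (hπnn : ∀ x, 0 ≤ π x) (hPnn : ∀ x y, 0 ≤ P x y) (f : Ω → ℝ) :
    0 ≤ dirichletForm π P f :=
  mul_nonneg (by norm_num) <| sum_nonneg fun x _ ↦ sum_nonneg fun y _ ↦
    mul_nonneg (mul_nonneg (hπnn x) (hPnn x y)) (sq_nonneg _)

lemma mul_dirichletForm_le {c : ℝ}
    (hflow : ∀ x y, x ≠ y → c * (π' x * P' x y) ≤ π x * P x y) (f : Ω → ℝ) :
    c * dirichletForm π' P' f ≤ dirichletForm π P f := by
  rw [dirichletForm, dirichletForm, mul_left_comm]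
  refine mul_le_mul_of_nonneg_left ?_ (by norm_num)
  rw [mul_sum]
  refine sum_le_sum fun x _ ↦ ?_
  rw [mul_sum]
  refine sum_le_sum fun y _ ↦ ?_
  rcases eq_or_ne x y with rfl | hxy
  · simp
  · rw [← mul_assoc]
    exact mul_le_mul_of_nonneg_right (hflow x y hxy) (sq_nonneg _)

lemma mul_eq_zero_of_forall_variance_eq_zero (hπnn : ∀ x, 0 ≤ π x) (hπsum : ∑ x, π x = 1)
    (hvar : ∀ f, variance π f = 0) {x y : Ω} (hxy : x ≠ y) : π x * π y = 0 := by
  classical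
  have sq_eq (z : Ω) : π z ^ 2 = π z := by
    have := hvar fun w ↦ if w = z then 1 else 0
    simp only [variance, ite_pow, one_pow, zero_pow two_ne_zero, mul_ite, mul_one, mul_zero,
      sum_ite_eq', if_pos (mem_univ z)] at this
    linarith
  have hle : π x + π y ≤ 1 :=
    hπsum ▸ add_le_sum (fun z _ ↦ hπnn z) (mem_univ x) (mem_univ y) hxy
  nlinarith [sq_eq x, sq_eq y, hπnn x, hπnn y, mul_nonneg (hπnn x) (hπnn y)]

lemma dirichletForm_eq_zero_of_forall_variance_eq_zero (hπnn : ∀ x, 0 ≤ π x)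
    (hπsum : ∑ x, π x = 1) (hrev : ∀ x y, π x * P x y = π y * P y x)
    (hvar : ∀ f, variance π f = 0) (f : Ω → ℝ) :
    dirichletForm π P f = 0 := by
  refine mul_eq_zero_of_right _ <| sum_eq_zero fun x _ ↦ sum_eq_zero fun y _ ↦ ?_
  rcases eq_or_ne x y with rfl | hxy
  · simp
  · have hsq : (π x * P x y) ^ 2 = π x * π y * (P x y * P y x) := by
      rw [sq]; nth_rw 2 [hrev]; ring
    rw [mul_eq_zero_of_forall_variance_eq_zero hπnn hπsum hvar hxy, zero_mul,
      pow_eq_zero_iff two_ne_zero] at hsq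
    rw [hsq, zero_mul]

lemma specGap_le (hπnn : ∀ x, 0 ≤ π x) (hπsum : ∑ x, π x = 1) (hPnn : ∀ x y, 0 ≤ P x y)
    {f : Ω → ℝ} (hf : variance π f ≠ 0) :
    specGap π P ≤ dirichletForm π P f / variance π f := by
  refine csInf_le ⟨0, ?_⟩ ⟨f, hf, rfl⟩
  rintro _ ⟨g, -, rfl⟩
  exact div_nonneg (dirichletForm_nonneg hπnn hPnn g) (variance_nonneg hπnn hπsum g)

lemma specGap_eq_zero_of_forall_variance_eq_zero (hvar : ∀ f, variance π f = 0) :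
    specGap π P = 0 := by
  have hempty : {r : ℝ | ∃ f, variance π f ≠ 0 ∧ r = dirichletForm π P f / variance π f} = ∅ :=
    Set.eq_empty_of_forall_notMem fun _ ⟨f, hf, _⟩ ↦ hf (hvar f)
  rw [specGap, hempty, Real.sInf_empty]

lemma specGap_eq_zero_of_forall_dirichletForm_eq_zero (hE : ∀ f, dirichletForm π P f = 0) :
    specGap π P = 0 := by
  have hsub : {r : ℝ | ∃ f, variance π f ≠ 0 ∧ r = dirichletForm π P f / variance π f} ⊆ {0} := by
    rintro _ ⟨f, -, rfl⟩
    rw [hE, zero_div, Set.mem_singleton_iff]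
  rcases Set.subset_singleton_iff_eq.mp hsub with h | h <;> simp [specGap, h]

end

theorem stmt7_general {Ω : Type*} [Fintype Ω]
    (P P' : Matrix Ω Ω ℝ) (π π' : Ω → ℝ)
    (hP'nn : ∀ x y, 0 ≤ P' x y)
    (hπnn : ∀ x, 0 ≤ π x) (hπsum : ∑ x, π x = 1)
    (hπ'nn : ∀ x, 0 ≤ π' x) (hπ'sum : ∑ x, π' x = 1)
    (hrev : ∀ x y, π x * P x y = π y * P y x)
    (A : ℝ) (hA : 1 ≤ A)
    (hflow : ∀ x y, x ≠ y → A⁻¹ * (π' x * P' x y) ≤ π x * P x y)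
    (hmass : ∀ x, π x ≤ A * π' x) :
    (A ^ 2)⁻¹ * specGap π' P' ≤ specGap π P := by
  have hA0 : 0 < A := by linarith
  by_cases hdeg : ∀ f, variance π f = 0
  · have hE' (f : Ω → ℝ) : dirichletForm π' P' f = 0 := by
      have h := mul_dirichletForm_le hflow f
      rw [dirichletForm_eq_zero_of_forall_variance_eq_zero hπnn hπsum hrev hdeg] at h
      exact le_antisymm (nonpos_of_mul_nonpos_right h (inv_pos.mpr hA0))
        (dirichletForm_nonneg hπ'nn hP'nn f)
    rw [specGap_eq_zero_of_forall_variance_eq_zero hdeg,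
      specGap_eq_zero_of_forall_dirichletForm_eq_zero hE', mul_zero]
  obtain ⟨f₀, hf₀⟩ := not_forall.mp hdeg
  refine le_csInf ⟨_, f₀, hf₀, rfl⟩ ?_
  rintro _ ⟨f, hf, rfl⟩
  have hvar := variance_le_mul_variance hπsum hπ'sum hmass f
  have hpos : 0 < variance π f := (variance_nonneg hπnn hπsum f).lt_of_ne' hf
  have hpos' : 0 < variance π' f := pos_of_mul_pos_right (hpos.trans_le hvar) hA0.le
  have hE'nn := dirichletForm_nonneg hπ'nn hP'nn f
  calc (A ^ 2)⁻¹ * specGap π' P'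
      ≤ (A ^ 2)⁻¹ * (dirichletForm π' P' f / variance π' f) := by
        gcongr; exact specGap_le hπ'nn hπ'sum hP'nn hpos'.ne'
    _ = A⁻¹ * dirichletForm π' P' f / (A * variance π' f) := by field_simp
    _ ≤ A⁻¹ * dirichletForm π' P' f / variance π f :=
        div_le_div_of_nonneg_left (by positivity) hpos hvar
    _ ≤ dirichletForm π P f / variance π f :=
        div_le_div_of_nonneg_right (mul_dirichletForm_le hflow f) hpos.le

/-- comparison of Poincaré constants. If `π(x)P(x,y) ≥ A⁻¹ π'(x)P'(x,y)` for
all `x ≠ y` and `π(x) ≤ A π'(x)`, then `gap(P) ≥ A⁻² gap(P')`. -/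
theorem stmt7 {Ω : Type*} [Fintype Ω] [Nonempty Ω]
    (P P' : Matrix Ω Ω ℝ) (π π' : Ω → ℝ)
    (hPnn : ∀ x y, 0 ≤ P x y) (hProw : ∀ x, ∑ y, P x y = 1)
    (hP'nn : ∀ x y, 0 ≤ P' x y) (hP'row : ∀ x, ∑ y, P' x y = 1)
    (hπnn : ∀ x, 0 ≤ π x) (hπsum : ∑ x, π x = 1)
    (hπ'nn : ∀ x, 0 ≤ π' x) (hπ'sum : ∑ x, π' x = 1)
    (hrev : ∀ x y, π x * P x y = π y * P y x)
    (hrev' : ∀ x y, π' x * P' x y = π' y * P' y x)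
    (A : ℝ) (hA : 1 ≤ A)
    (hflow : ∀ x y, x ≠ y → A⁻¹ * (π' x * P' x y) ≤ π x * P x y)
    (hmass : ∀ x, π x ≤ A * π' x) :
    (A ^ 2)⁻¹ * specGap π' P' ≤ specGap π P :=
  stmt7_general P P' π π' hP'nn hπnn hπsum hπ'nn hπ'sum hrev A hA hflow hmass
end

section
/- The number of spanning trees of the 2×n grid graph satisfies the recurrence T_n = 4T_{n−1} − T_{n−2} with T_1 = 1, T_2 = 4; consequently T_n = ((2+√3)^n − (2−√3)^n)/(2√3) and there exist constants c > 0 and a = 2+√3 such that c(a^n − 1) ≤ T_n ≤ c·a^n for all n ≥ 1. -/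
/-!
Attach a new rung `a' b'` to the end rung `a b` of a graph `G` through the edges `a a'`, `b b'`.
A spanning tree of the result uses at least two of the three new edges, and it is determined by
which ones together with its restriction `T` to the old vertices. With exactly two new edges, `T`
is a spanning tree of `G`; with all three, `T` misses `a b` and `T + a b` is a spanning tree
of `G` through `a b`. So if `τ` counts spanning trees and `ρ` those through the last rung,
`τ' = 3τ + ρ` and `ρ' = 2τ + ρ`, and eliminating `ρ` gives `τₙ₊₂ = 4τₙ₊₁ - τₙ` for the ladders.
The closed form follows because `2 ± √3` are the roots of `x² = 4x - 1`, and the bounds because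
`0 ≤ 2 - √3 ≤ 1`.
-/

open SimpleGraph

/-- The number of spanning trees of the `2 × n` grid graph. -/
noncomputable def gridTreeCount (n : ℕ) : ℕ :=
  {T : (pathGraph 2 □ pathGraph n).Subgraph | T.IsSpanning ∧ T.coe.IsTree}.ncard

namespace SimpleGraph

section

variable {V W : Type*}

theorem Reachable.map_of_forall_adj {G : SimpleGraph V} {H : SimpleGraph W} (f : V → W)
    (hf : ∀ ⦃u v⦄, G.Adj u v → H.Reachable (f u) (f v)) {u v : V} (h : G.Reachable u v) :
    H.Reachable (f u) (f v) := by
  obtain ⟨w⟩ := h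
  induction w with
  | nil => rfl
  | cons huv _ ih => exact (hf huv).trans ih

theorem Reachable.eq_of_forall_adj_eq {G : SimpleGraph V} (f : V → W)
    (hf : ∀ ⦃u v⦄, G.Adj u v → f u = f v) {u v : V} (h : G.Reachable u v) : f u = f v :=
  reachable_bot.mp <| h.map_of_forall_adj f fun _ _ huv ↦ reachable_bot.mpr (hf huv)

theorem Reachable.eq_of_forall_not_adj {G : SimpleGraph V} {u v : V} (h : G.Reachable u v)
    (hu : ∀ w, ¬G.Adj u w) : u = v := by
  obtain ⟨w⟩ := h
  cases w with
  | nil => rfl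
  | cons huw _ => exact (hu _ huw).elim

theorem Connected.of_forall_reachable_range {G : SimpleGraph V} {H : SimpleGraph W} (f : V → W)
    (hG : G.Connected) (hf : ∀ ⦃u v⦄, G.Adj u v → H.Reachable (f u) (f v))
    (hrange : ∀ w, ∃ v, H.Reachable w (f v)) : H.Connected := by
  have : Nonempty W := hG.nonempty.map f
  refine ⟨fun w₁ w₂ ↦ ?_⟩
  obtain ⟨v₁, h₁⟩ := hrange w₁
  obtain ⟨v₂, h₂⟩ := hrange w₂
  exact (h₁.trans ((hG.preconnected v₁ v₂).map_of_forall_adj f hf)).trans h₂.symm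

theorem natCard_edgeSet_sup_edge [Finite V] {G : SimpleGraph V} {u v : V} (hne : u ≠ v)
    (h : ¬G.Adj u v) : Nat.card (G ⊔ edge u v).edgeSet = Nat.card G.edgeSet + 1 := by
  simp only [Nat.card_coe_set_eq]
  rw [edgeSet_sup, edgeSet_edge_of_ne hne, Set.union_singleton,
    Set.ncard_insert_of_notMem (by exact h)]

def spanningTrees (G : SimpleGraph V) : Set (SimpleGraph V) := {T | T ≤ G ∧ T.IsTree}

theorem ncard_isSpanning_isTree (G : SimpleGraph V) :
    {T : G.Subgraph | T.IsSpanning ∧ T.coe.IsTree}.ncard = G.spanningTrees.ncard := by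
  refine Set.ncard_congr (fun T _ ↦ T.spanningCoe) ?_ ?_ ?_
  · rintro T ⟨hT, htree⟩
    exact ⟨T.spanningCoe_le, (T.spanningCoeEquivCoeOfSpanning hT).isTree_iff.mpr htree⟩
  · rintro T₁ T₂ ⟨h₁, -⟩ ⟨h₂, -⟩ heq
    exact Subgraph.ext (h₁.verts_eq_univ.trans h₂.verts_eq_univ.symm)
      (Subgraph.spanningCoe_inj.mp heq)
  · rintro T ⟨hle, htree⟩
    have hsp := toSubgraph.isSpanning T hle
    exact ⟨toSubgraph T hle,
      ⟨hsp, ((toSubgraph T hle).spanningCoeEquivCoeOfSpanning hsp).isTree_iff.mp htree⟩, rfl⟩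

theorem spanningTrees_of_isEmpty [IsEmpty V] (G : SimpleGraph V) : G.spanningTrees = ∅ :=
  Set.eq_empty_of_forall_notMem fun _ hT ↦ hT.2.connected.nonempty.elim isEmptyElim

theorem IsTree.spanningTrees_eq [Finite V] {G : SimpleGraph V} (hG : G.IsTree) :
    G.spanningTrees = {G} := by
  refine Set.eq_singleton_iff_unique_mem.mpr ⟨⟨le_rfl, hG⟩, fun T ⟨hle, hT⟩ ↦ ?_⟩
  have hcard := (isTree_iff_connected_and_card.mp hT).2.trans
    (isTree_iff_connected_and_card.mp hG).2.symm
  simp only [Nat.card_coe_set_eq, add_left_inj] at hcard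
  exact edgeSet_inj.mp (Set.eq_of_subset_of_ncard_le (edgeSet_mono hle) hcard.ge)

theorem ncard_spanningTrees_adj {G : SimpleGraph V} {a b : V} (hab : G.Adj a b) :
    {T ∈ G.spanningTrees | T.Adj a b}.ncard =
      {T | T ≤ G ∧ ¬T.Adj a b ∧ (T ⊔ edge a b).IsTree}.ncard := by
  symm
  refine Set.ncard_congr (fun T _ ↦ T ⊔ edge a b) ?_ ?_ ?_
  · rintro T ⟨hle, -, htree⟩
    exact ⟨⟨sup_le hle ((edge_le_iff _).mpr (.inr hab)), htree⟩, by simp [edge_adj, hab.ne]⟩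
  · rintro T₁ T₂ ⟨-, h₁, -⟩ ⟨-, h₂, -⟩ heq
    rw [← sdiff_edge _ h₁, ← sdiff_edge _ h₂, ← sup_sdiff_right_self, heq, sup_sdiff_right_self]
  · rintro T ⟨⟨hle, htree⟩, hT⟩
    refine ⟨T \ edge a b, ⟨sdiff_le.trans hle, by simp [edge_adj, hT.ne], ?_⟩, ?_⟩ <;>
      rw [sdiff_sup_cancel ((edge_le_iff _).mpr (.inr hT))]
    exact htree

end

section RungExtension

variable {V V' : Type*} {ι : V ↪ V'} {a b : V} {a' b' : V'}

theorem apply_ne_of_range_eq (hι : Set.range ι = {a', b'}ᶜ) (v : V) : ι v ≠ a' ∧ ι v ≠ b' := by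
  simpa [hι] using Set.mem_range_self (f := ι) v

theorem mem_range_of_range_eq (hι : Set.range ι = {a', b'}ᶜ) {w : V'} (ha : w ≠ a')
    (hb : w ≠ b') : ∃ v, ι v = w := by
  simp [← Set.mem_range, hι, ha, hb]

theorem natCard_eq_add_two [Finite V'] (hι : Set.range ι = {a', b'}ᶜ) (hne : a' ≠ b') :
    Nat.card V' = Nat.card V + 2 := by
  rw [← Set.ncard_add_ncard_compl {a', b'}, ← hι, Set.ncard_range_of_injective ι.injective,
    Set.ncard_pair hne, add_comm]

/-- Given `Set.range ι = {a', b'}ᶜ`, this adds to `T` the new vertices `a'`, `b'` and the new edges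
among `ι a a'`, `ι b b'`, `a' b'` selected by `p`; with all three, it turns the `2 × n` grid
into the `2 × (n + 1)` grid. -/
def rungExtension (T : SimpleGraph V) (ι : V ↪ V') (a b : V) (a' b' : V')
    (p : Bool × Bool × Bool) : SimpleGraph V' :=
  T.map ι ⊔ (if p.1 then edge (ι a) a' else ⊥) ⊔ (if p.2.1 then edge (ι b) b' else ⊥) ⊔
    (if p.2.2 then edge a' b' else ⊥)

theorem rungExtension_adj {T : SimpleGraph V} {p : Bool × Bool × Bool} {u v : V'} :
    (T.rungExtension ι a b a' b' p).Adj u v ↔ (∃ x y, T.Adj x y ∧ ι x = u ∧ ι y = v) ∨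
      (p.1 ∧ (edge (ι a) a').Adj u v) ∨ (p.2.1 ∧ (edge (ι b) b').Adj u v) ∨
      (p.2.2 ∧ (edge a' b').Adj u v) := by
  rcases p with ⟨_ | _, _ | _, _ | _⟩ <;> simp [rungExtension, or_assoc]

theorem rungExtension_adj_apply {T : SimpleGraph V} {p : Bool × Bool × Bool} {u v : V}
    (h : T.Adj u v) : (T.rungExtension ι a b a' b' p).Adj (ι u) (ι v) :=
  rungExtension_adj.mpr (.inl ⟨u, v, h, rfl, rfl⟩)

theorem comap_rungExtension (hι : Set.range ι = {a', b'}ᶜ) (T : SimpleGraph V)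
    (p : Bool × Bool × Bool) :
    (T.rungExtension ι a b a' b' p).comap ι = T := by
  ext x y
  have := apply_ne_of_range_eq hι
  simp [rungExtension_adj, edge_adj, this]

theorem rungExtension_adj_left_iff (hι : Set.range ι = {a', b'}ᶜ) (hne : a' ≠ b')
    (T : SimpleGraph V) (p : Bool × Bool × Bool) :
    (T.rungExtension ι a b a' b' p).Adj (ι a) a' ↔ p.1 := by
  have h₁ v := (apply_ne_of_range_eq hι v).1
  have h₂ v := (apply_ne_of_range_eq hι v).2
  simp [rungExtension_adj, edge_adj, h₁, h₂, hne]

theorem rungExtension_adj_right_iff (hι : Set.range ι = {a', b'}ᶜ) (hne : a' ≠ b')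
    (T : SimpleGraph V) (p : Bool × Bool × Bool) :
    (T.rungExtension ι a b a' b' p).Adj (ι b) b' ↔ p.2.1 := by
  have h₁ v := (apply_ne_of_range_eq hι v).1
  have h₂ v := (apply_ne_of_range_eq hι v).2
  simp [rungExtension_adj, edge_adj, h₁, h₂, hne.symm]

theorem rungExtension_adj_rung_iff (hι : Set.range ι = {a', b'}ᶜ) (hne : a' ≠ b')
    (T : SimpleGraph V) (p : Bool × Bool × Bool) :
    (T.rungExtension ι a b a' b' p).Adj a' b' ↔ p.2.2 := by
  have h₁ v := (apply_ne_of_range_eq hι v).1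
  have h₂ v := (apply_ne_of_range_eq hι v).2
  simp [rungExtension_adj, edge_adj, h₁, h₂, (h₁ _).symm, (h₂ _).symm, hne]

theorem rungExtension_inj (hι : Set.range ι = {a', b'}ᶜ) (hne : a' ≠ b')
    {T₁ T₂ : SimpleGraph V} {p₁ p₂ : Bool × Bool × Bool} :
    T₁.rungExtension ι a b a' b' p₁ = T₂.rungExtension ι a b a' b' p₂ ↔ T₁ = T₂ ∧ p₁ = p₂ := by
  refine ⟨fun h ↦ ⟨?_, ?_⟩, fun h ↦ h.1 ▸ h.2 ▸ rfl⟩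
  · rw [← comap_rungExtension hι T₁ p₁, h, comap_rungExtension hι]
  · have h₁ := rungExtension_adj_left_iff (a := a) (b := b) hι hne
    have h₂ := rungExtension_adj_right_iff (a := a) (b := b) hι hne
    have h₃ := rungExtension_adj_rung_iff (a := a) (b := b) hι hne
    ext
    · rw [Bool.eq_iff_iff, ← h₁ T₁, ← h₁ T₂, h]
    · rw [Bool.eq_iff_iff, ← h₂ T₁, ← h₂ T₂, h]
    · rw [Bool.eq_iff_iff, ← h₃ T₁, ← h₃ T₂, h]

theorem rungExtension_mono {T G : SimpleGraph V} (h : T ≤ G) (p : Bool × Bool × Bool) :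
    T.rungExtension ι a b a' b' p ≤ G.rungExtension ι a b a' b' (true, true, true) := by
  intro u v
  simp only [rungExtension_adj]
  rintro (huv | ⟨-, huv⟩ | ⟨-, huv⟩ | ⟨-, huv⟩)
  · obtain ⟨x, y, hxy, rfl, rfl⟩ := huv
    exact .inl ⟨x, y, h hxy, rfl, rfl⟩
  all_goals simp [huv]

theorem exists_eq_rungExtension_comap {G : SimpleGraph V} {T' : SimpleGraph V'}
    (h : T' ≤ G.rungExtension ι a b a' b' (true, true, true)) :
    ∃ p, T' = (T'.comap ι).rungExtension ι a b a' b' p := by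
  classical
  refine ⟨(decide (T'.Adj (ι a) a'), decide (T'.Adj (ι b) b'), decide (T'.Adj a' b')), ?_⟩
  ext u v
  rw [rungExtension_adj]
  constructor
  · intro huv
    rcases rungExtension_adj.mp (h huv) with ⟨x, y, -, rfl, rfl⟩ | ⟨-, he⟩ | ⟨-, he⟩ | ⟨-, he⟩
    · exact .inl ⟨x, y, huv, rfl, rfl⟩
    all_goals
      rw [edge_adj] at he
      rcases he with ⟨⟨rfl, rfl⟩ | ⟨rfl, rfl⟩, -⟩ <;> simp [huv, huv.symm, edge_adj, huv.ne]
  · rintro (⟨x, y, hxy, rfl, rfl⟩ | ⟨hp, he⟩ | ⟨hp, he⟩ | ⟨hp, he⟩)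
    · exact hxy
    all_goals
      rw [decide_eq_true_iff] at hp
      rw [edge_adj] at he
      rcases he with ⟨⟨rfl, rfl⟩ | ⟨rfl, rfl⟩, -⟩
      exacts [hp, hp.symm]

theorem ncard_setOf_le_rungExtension [Finite V] (hι : Set.range ι = {a', b'}ᶜ) (hne : a' ≠ b')
    (G : SimpleGraph V) (Q : SimpleGraph V' → Prop) :
    {T' | T' ≤ G.rungExtension ι a b a' b' (true, true, true) ∧ Q T'}.ncard =
      ∑ p, {T | T ≤ G ∧ Q (T.rungExtension ι a b a' b' p)}.ncard := by
  have hunion : {T' | T' ≤ G.rungExtension ι a b a' b' (true, true, true) ∧ Q T'} =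
      ⋃ p, (rungExtension · ι a b a' b' p) '' {T | T ≤ G ∧ Q (T.rungExtension ι a b a' b' p)} := by
    ext T'
    simp only [Set.mem_ofPred_eq, Set.mem_iUnion, Set.mem_image]
    constructor
    · rintro ⟨hle, hQ⟩
      obtain ⟨p, hp⟩ := exists_eq_rungExtension_comap hle
      refine ⟨p, T'.comap ι, ⟨?_, hp ▸ hQ⟩, hp.symm⟩
      simpa only [comap_rungExtension hι] using comap_monotone ι hle
    · rintro ⟨p, T, ⟨hle, hQ⟩, rfl⟩
      exact ⟨rungExtension_mono hle p, hQ⟩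
  rw [hunion, Set.ncard_iUnion_of_finite (fun _ ↦ Set.toFinite _), finsum_eq_sum_of_fintype]
  · congr! 1 with p
    exact Set.ncard_image_of_injective _ fun T₁ T₂ h ↦ ((rungExtension_inj hι hne).mp h).1
  · intro p q hpq
    refine Set.disjoint_left.mpr ?_
    rintro _ ⟨T₁, -, rfl⟩ ⟨T₂, -, h⟩
    exact hpq ((rungExtension_inj hι hne).mp h).2.symm

theorem natCard_edgeSet_rungExtension [Finite V'] (hι : Set.range ι = {a', b'}ᶜ) (hne : a' ≠ b')
    (T : SimpleGraph V) (p : Bool × Bool × Bool) :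
    Nat.card (T.rungExtension ι a b a' b' p).edgeSet =
      Nat.card T.edgeSet + p.1.toNat + p.2.1.toNat + p.2.2.toNat := by
  have step (H : SimpleGraph V') (c : Bool) {u v : V'} (huv : u ≠ v) (h : ¬H.Adj u v) :
      Nat.card (H ⊔ if c then edge u v else ⊥).edgeSet = Nat.card H.edgeSet + c.toNat := by
    cases c
    · simp
    · simpa using natCard_edgeSet_sup_edge huv h
  have h₁ v := (apply_ne_of_range_eq hι v).1
  have h₂ v := (apply_ne_of_range_eq hι v).2
  unfold rungExtension
  rw [step, step, step, edgeSet_map, Nat.card_image_of_injective ι.sym2Map.injective]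
  all_goals first
    | exact h₁ _ | exact h₂ _ | exact hne
    | (try split_ifs) <;> simp [edge_adj, h₁, h₂, (h₁ _).symm, (h₂ _).symm, hne, hne.symm]

theorem rungExtension_connected (hι : Set.range ι = {a', b'}ᶜ) {T H : SimpleGraph V}
    {p : Bool × Bool × Bool} (hH : H.Connected)
    (hadj : ∀ ⦃u v⦄, H.Adj u v → (T.rungExtension ι a b a' b' p).Reachable (ι u) (ι v))
    (ha : ∃ v, (T.rungExtension ι a b a' b' p).Reachable a' (ι v))
    (hb : ∃ v, (T.rungExtension ι a b a' b' p).Reachable b' (ι v)) :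
    (T.rungExtension ι a b a' b' p).Connected := by
  refine hH.of_forall_reachable_range ι hadj fun w ↦ ?_
  by_cases hwa : w = a'
  · exact hwa ▸ ha
  by_cases hwb : w = b'
  · exact hwb ▸ hb
  obtain ⟨v, rfl⟩ := mem_range_of_range_eq hι hwa hwb
  exact ⟨v, .rfl⟩

theorem Connected.of_rungExtension (hι : Set.range ι = {a', b'}ᶜ) (hne : a' ≠ b')
    {T H : SimpleGraph V} {p : Bool × Bool × Bool} (hTH : T ≤ H) (x y : V)
    (ha : p.1 → H.Reachable a x) (hb : p.2.1 → H.Reachable b y) (hr : p.2.2 → H.Reachable x y)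
    (h : (T.rungExtension ι a b a' b' p).Connected) : H.Connected := by
  classical
  have h₁ v := (apply_ne_of_range_eq hι v).1
  have h₂ v := (apply_ne_of_range_eq hι v).2
  let g : V' → V := Function.extend ι id fun w ↦ if w = a' then x else y
  have hgι v : g (ι v) = v := ι.injective.extend_apply _ _ v
  have hga : g a' = x := by
    simp [g, Function.extend_apply' _ _ _ fun ⟨v, hv⟩ ↦ h₁ v hv]
  have hgb : g b' = y := by
    simp [g, Function.extend_apply' _ _ _ fun ⟨v, hv⟩ ↦ h₂ v hv, hne.symm]
  have hadj ⦃u v : V'⦄ (huv : (T.rungExtension ι a b a' b' p).Adj u v) :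
      H.Reachable (g u) (g v) := by
    rcases rungExtension_adj.mp huv with ⟨s, t, hst, rfl, rfl⟩ | ⟨hp, he⟩ | ⟨hp, he⟩ | ⟨hp, he⟩
    · rw [hgι, hgι]
      exact (hTH hst).reachable
    all_goals
      rw [edge_adj] at he
      rcases he with ⟨⟨rfl, rfl⟩ | ⟨rfl, rfl⟩, -⟩
      all_goals simp only [hgι, hga, hgb]
    exacts [ha hp, (ha hp).symm, hb hp, (hb hp).symm, hr hp, (hr hp).symm]
  have : Nonempty V := ⟨a⟩
  exact ⟨fun u v ↦ by simpa [hgι] using (h.preconnected (ι u) (ι v)).map_of_forall_adj g hadj⟩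


theorem not_isTree_rungExtension (hι : Set.range ι = {a', b'}ᶜ) (hne : a' ≠ b')
    (T : SimpleGraph V) {p : Bool × Bool × Bool}
    (hp : p.1 = false ∧ p.2.1 = false ∨ p.1 = false ∧ p.2.2 = false ∨
      p.2.1 = false ∧ p.2.2 = false) :
    ¬(T.rungExtension ι a b a' b' p).IsTree := by
  intro h
  have h₁ v := (apply_ne_of_range_eq hι v).1
  have h₂ v := (apply_ne_of_range_eq hι v).2
  have hreach := h.connected.preconnected
  rcases hp with ⟨ht, hb⟩ | ⟨ht, hr⟩ | ⟨hb, hr⟩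
  · -- no edge leaves the range of `ι`
    have := (hreach (ι a) a').eq_of_forall_adj_eq (· ∈ Set.range ι) fun u v huv ↦ by
      rcases rungExtension_adj.mp huv with ⟨x, y, -, rfl, rfl⟩ | ⟨hp, -⟩ | ⟨hp, -⟩ | ⟨-, he⟩
      · simp
      · simp [ht] at hp
      · simp [hb] at hp
      · rw [edge_adj] at he
        rcases he with ⟨⟨rfl, rfl⟩ | ⟨rfl, rfl⟩, -⟩ <;> simp [hι]
    simp [hι, h₁, h₂] at this
  · -- `a'` is isolated
    refine h₁ a ((hreach (ι a) a').symm.eq_of_forall_not_adj fun w hw ↦ ?_).symm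
    simp [rungExtension_adj, edge_adj, ht, hr, h₁, (h₁ _).symm, hne] at hw
  · -- `b'` is isolated
    refine h₂ b ((hreach (ι b) b').symm.eq_of_forall_not_adj fun w hw ↦ ?_).symm
    simp [rungExtension_adj, edge_adj, hb, hr, h₂, (h₂ _).symm, hne.symm] at hw

theorem isTree_rungExtension_iff [Finite V'] (hι : Set.range ι = {a', b'}ᶜ) (hne : a' ≠ b')
    {T : SimpleGraph V} {p : Bool × Bool × Bool}
    (hp : p = (true, true, false) ∨ p = (true, false, true) ∨ p = (false, true, true)) :
    (T.rungExtension ι a b a' b' p).IsTree ↔ T.IsTree := by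
  have := Finite.of_injective ι ι.injective
  have ht := (rungExtension_adj_left_iff (a := a) (b := b) hι hne T p).mpr
  have hb := (rungExtension_adj_right_iff (a := a) (b := b) hι hne T p).mpr
  have hr := (rungExtension_adj_rung_iff (a := a) (b := b) hι hne T p).mpr
  rw [isTree_iff_connected_and_card, isTree_iff_connected_and_card,
    natCard_edgeSet_rungExtension hι hne, natCard_eq_add_two hι hne]
  refine and_congr ⟨fun h ↦ ?_, fun h ↦ ?_⟩ (by rcases hp with rfl | rfl | rfl <;> simp)
  · rcases hp with rfl | rfl | rfl
    · exact h.of_rungExtension hι hne le_rfl a b (fun _ ↦ .rfl) (fun _ ↦ .rfl) (by simp)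
    · exact h.of_rungExtension hι hne le_rfl a a (fun _ ↦ .rfl) (by simp) (fun _ ↦ .rfl)
    · exact h.of_rungExtension hι hne le_rfl b b (by simp) (fun _ ↦ .rfl) (fun _ ↦ .rfl)
  · refine rungExtension_connected hι h (fun u v huv ↦ (rungExtension_adj_apply huv).reachable)
      ?_ ?_ <;> rcases hp with rfl | rfl | rfl
    exacts [⟨a, (ht rfl).symm.reachable⟩, ⟨a, (ht rfl).symm.reachable⟩,
      ⟨b, (hr rfl).reachable.trans (hb rfl).symm.reachable⟩, ⟨b, (hb rfl).symm.reachable⟩,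
      ⟨a, (hr rfl).symm.reachable.trans (ht rfl).symm.reachable⟩, ⟨b, (hb rfl).symm.reachable⟩]

theorem isTree_rungExtension_iff_isTree_sup_edge [Finite V'] (hι : Set.range ι = {a', b'}ᶜ)
    (hne : a' ≠ b') (hab : a ≠ b) {T : SimpleGraph V} :
    (T.rungExtension ι a b a' b' (true, true, true)).IsTree ↔
      ¬T.Adj a b ∧ (T ⊔ edge a b).IsTree := by
  have := Finite.of_injective ι ι.injective
  have ht := (rungExtension_adj_left_iff (a := a) (b := b) hι hne T (true, true, true)).mpr rfl
  have hb := (rungExtension_adj_right_iff (a := a) (b := b) hι hne T (true, true, true)).mpr rfl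
  have hr := (rungExtension_adj_rung_iff (a := a) (b := b) hι hne T (true, true, true)).mpr rfl
  have hconn : (T.rungExtension ι a b a' b' (true, true, true)).Connected ↔
      (T ⊔ edge a b).Connected := by
    refine ⟨fun h ↦ h.of_rungExtension hι hne le_sup_left a b (fun _ ↦ .rfl) (fun _ ↦ .rfl)
      fun _ ↦ Adj.reachable (by simp [edge_adj, hab]), fun h ↦ ?_⟩
    refine rungExtension_connected hι h (fun u v huv ↦ ?_) ⟨a, ht.symm.reachable⟩
      ⟨b, hb.symm.reachable⟩
    rcases huv with huv | huv
    · exact (rungExtension_adj_apply huv).reachable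
    -- the edge `a b` is replaced by the path `ι a, a', b', ι b`
    have hpath := (ht.reachable.trans hr.reachable).trans hb.symm.reachable
    rw [edge_adj] at huv
    rcases huv with ⟨⟨rfl, rfl⟩ | ⟨rfl, rfl⟩, -⟩
    exacts [hpath, hpath.symm]
  rw [isTree_iff_connected_and_card, isTree_iff_connected_and_card, hconn,
    natCard_edgeSet_rungExtension hι hne, natCard_eq_add_two hι hne]
  simp only [Bool.toNat_true]
  constructor
  · rintro ⟨hc, hcard⟩
    have hnadj : ¬T.Adj a b := fun h ↦ by
      have := (sup_edge_of_adj _ h ▸ hc).card_vert_le_card_edgeSet_add_one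
      omega
    exact ⟨hnadj, hc, by rw [natCard_edgeSet_sup_edge hab hnadj]; omega⟩
  · rintro ⟨hnadj, hc, hcard⟩
    rw [natCard_edgeSet_sup_edge hab hnadj] at hcard
    exact ⟨hc, by omega⟩

theorem ncard_setOf_isTree_rungExtension [Finite V'] (hι : Set.range ι = {a', b'}ᶜ)
    (hne : a' ≠ b') {G : SimpleGraph V} (hab : G.Adj a b) (p : Bool × Bool × Bool) :
    {T | T ≤ G ∧ (T.rungExtension ι a b a' b' p).IsTree}.ncard =
      if p = (true, true, true) then {T ∈ G.spanningTrees | T.Adj a b}.ncard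
      else if p.1.toNat + p.2.1.toNat + p.2.2.toNat = 2 then G.spanningTrees.ncard else 0 := by
  have := Finite.of_injective ι ι.injective
  rcases p with ⟨_ | _, _ | _, _ | _⟩
  all_goals first
    | simp [not_isTree_rungExtension hι hne]; done
    | simp [isTree_rungExtension_iff hι hne]; rfl
    | simp [isTree_rungExtension_iff_isTree_sup_edge hι hne hab.ne, ncard_spanningTrees_adj hab]

theorem ncard_spanningTrees_rungExtension [Finite V'] (hι : Set.range ι = {a', b'}ᶜ)
    (hne : a' ≠ b') {G : SimpleGraph V} (hab : G.Adj a b) :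
    (G.rungExtension ι a b a' b' (true, true, true)).spanningTrees.ncard =
      3 * G.spanningTrees.ncard + {T ∈ G.spanningTrees | T.Adj a b}.ncard := by
  have := Finite.of_injective ι ι.injective
  rw [spanningTrees, ncard_setOf_le_rungExtension hι hne]
  simp [Fintype.sum_prod_type, ncard_setOf_isTree_rungExtension hι hne hab]
  ring

theorem ncard_spanningTrees_rungExtension_adj [Finite V'] (hι : Set.range ι = {a', b'}ᶜ)
    (hne : a' ≠ b') {G : SimpleGraph V} (hab : G.Adj a b) :
    {T' ∈ (G.rungExtension ι a b a' b' (true, true, true)).spanningTrees | T'.Adj a' b'}.ncard =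
      2 * G.spanningTrees.ncard + {T ∈ G.spanningTrees | T.Adj a b}.ncard := by
  have := Finite.of_injective ι ι.injective
  have hsep : {T' ∈ (G.rungExtension ι a b a' b' (true, true, true)).spanningTrees |
      T'.Adj a' b'} = {T' | T' ≤ G.rungExtension ι a b a' b' (true, true, true) ∧
        (T'.IsTree ∧ T'.Adj a' b')} := by
    ext
    simp [spanningTrees, and_assoc]
  rw [hsep, ncard_setOf_le_rungExtension hι hne]
  simp [Fintype.sum_prod_type, rungExtension_adj_rung_iff hι hne,
    ncard_setOf_isTree_rungExtension hι hne hab]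
  ring

end RungExtension
end SimpleGraph

abbrev ladderGraph (n : ℕ) : SimpleGraph (Fin 2 × Fin n) := pathGraph 2 □ pathGraph n

section Ladder

variable (n : ℕ)

theorem ladderGraph_one_eq_starGraph : ladderGraph 1 = starGraph (0, 0) := by
  ext ⟨i, x⟩ ⟨j, y⟩
  fin_cases i <;> fin_cases j <;> fin_cases x <;> fin_cases y <;>
    simp [boxProd_adj, pathGraph_adj, starGraph_adj]

theorem ladderGraph_adj_last : (ladderGraph (n + 1)).Adj (0, Fin.last n) (1, Fin.last n) := by
  simp [boxProd_adj, pathGraph_adj]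

theorem range_prodMap_castSuccEmb :
    Set.range ((Function.Embedding.refl (Fin 2)).prodMap (Fin.castSuccEmb (n := n + 1))) =
      {(0, Fin.last (n + 1)), (1, Fin.last (n + 1))}ᶜ := by
  ext ⟨i, x⟩
  induction x using Fin.lastCases
  · fin_cases i <;> simp
  · simp [Fin.castSucc_ne_last, Fin.is_le]

theorem ladderGraph_add_two : ladderGraph (n + 2) =
    (ladderGraph (n + 1)).rungExtension
      ((Function.Embedding.refl (Fin 2)).prodMap Fin.castSuccEmb) (0, Fin.last n) (1, Fin.last n)
      (0, Fin.last (n + 1)) (1, Fin.last (n + 1)) (true, true, true) := by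
  ext ⟨i, x⟩ ⟨j, y⟩
  induction x using Fin.lastCases <;> induction y using Fin.lastCases <;>
    simp [rungExtension_adj, boxProd_adj, pathGraph_adj, edge_adj, Fin.castSucc_ne_last,
      (Fin.castSucc_ne_last _).symm]
  all_goals fin_cases i <;> fin_cases j <;> simp [Fin.ext_iff] <;> omega

end Ladder

noncomputable def lastRungTreeCount (n : ℕ) : ℕ :=
  {T ∈ (ladderGraph (n + 1)).spanningTrees | T.Adj (0, Fin.last n) (1, Fin.last n)}.ncard

theorem gridTreeCount_eq_ncard_spanningTrees (n : ℕ) :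
    gridTreeCount n = (ladderGraph n).spanningTrees.ncard :=
  ncard_isSpanning_isTree _

theorem gridTreeCount_zero : gridTreeCount 0 = 0 := by
  simp [gridTreeCount_eq_ncard_spanningTrees, spanningTrees_of_isEmpty]

theorem gridTreeCount_one : gridTreeCount 1 = 1 := by
  rw [gridTreeCount_eq_ncard_spanningTrees, ladderGraph_one_eq_starGraph,
    (isTree_starGraph _).spanningTrees_eq, Set.ncard_singleton]

theorem lastRungTreeCount_zero : lastRungTreeCount 0 = 1 := by
  have hadj := ladderGraph_adj_last 0
  rw [ladderGraph_one_eq_starGraph] at hadj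
  rw [lastRungTreeCount, ladderGraph_one_eq_starGraph, (isTree_starGraph _).spanningTrees_eq,
    Set.ncard_eq_one]
  exact ⟨_, Set.ext fun T ↦ ⟨fun h ↦ h.1, fun h ↦ ⟨h, h ▸ hadj⟩⟩⟩

theorem gridTreeCount_add_two (n : ℕ) :
    gridTreeCount (n + 2) = 3 * gridTreeCount (n + 1) + lastRungTreeCount n := by
  rw [gridTreeCount_eq_ncard_spanningTrees, ladderGraph_add_two,
    ncard_spanningTrees_rungExtension (range_prodMap_castSuccEmb n) (by simp)
      (ladderGraph_adj_last n), gridTreeCount_eq_ncard_spanningTrees, lastRungTreeCount]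

theorem lastRungTreeCount_succ (n : ℕ) :
    lastRungTreeCount (n + 1) = 2 * gridTreeCount (n + 1) + lastRungTreeCount n := by
  rw [lastRungTreeCount, ladderGraph_add_two,
    ncard_spanningTrees_rungExtension_adj (range_prodMap_castSuccEmb n) (by simp)
      (ladderGraph_adj_last n), gridTreeCount_eq_ncard_spanningTrees, lastRungTreeCount]

theorem gridTreeCount_two : gridTreeCount 2 = 4 := by
  rw [gridTreeCount_add_two, gridTreeCount_one, lastRungTreeCount_zero]

theorem gridTreeCount_add_two_add_self (n : ℕ) :
    gridTreeCount (n + 2) + gridTreeCount n = 4 * gridTreeCount (n + 1) := by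
  cases n with
  | zero => rw [gridTreeCount_two, gridTreeCount_zero, gridTreeCount_one]
  | succ n =>
    have h₁ := gridTreeCount_add_two (n + 1)
    have h₂ : gridTreeCount (n + 1 + 1) = _ := gridTreeCount_add_two n
    have h₃ := lastRungTreeCount_succ n
    omega

theorem eq_closed_form_of_recurrence {u : ℕ → ℝ} (h₀ : u 0 = 0) (h₁ : u 1 = 1)
    (h : ∀ n, u (n + 2) = 4 * u (n + 1) - u n) (n : ℕ) :
    u n = ((2 + √3) ^ n - (2 - √3) ^ n) / (2 * √3) := by
  have h3 : √3 ^ 2 = 3 := Real.sq_sqrt (by norm_num)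
  have hroot (x : ℝ) (hx : x ^ 2 = 4 * x - 1) (k : ℕ) :
      x ^ (k + 2) = 4 * x ^ (k + 1) - x ^ k := by
    rw [pow_add, hx]
    ring
  induction n using Nat.twoStepInduction with
  | zero => simp [h₀]
  | one =>
    rw [h₁]
    field_simp
    ring
  | more n ih₀ ih₁ =>
    rw [h, ih₀, ih₁, hroot (2 + √3) (by linear_combination h3),
      hroot (2 - √3) (by linear_combination h3)]
    ring

theorem gridTreeCount_eq_closed_form (n : ℕ) :
    (gridTreeCount n : ℝ) = ((2 + √3) ^ n - (2 - √3) ^ n) / (2 * √3) := by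
  refine eq_closed_form_of_recurrence (u := fun n ↦ (gridTreeCount n : ℝ))
    (by simp [gridTreeCount_zero]) (by simp [gridTreeCount_one]) (fun n ↦ ?_) n
  rw [eq_sub_iff_add_eq]
  exact_mod_cast gridTreeCount_add_two_add_self n

/-- the number `T_n` of spanning trees of the `2 × n` grid graph satisfies
`T_1 = 1`, `T_2 = 4`, `T_n = 4 T_{n-1} - T_{n-2}`, the closed form
`T_n = ((2+√3)^n - (2-√3)^n)/(2√3)`, and `c (a^n - 1) ≤ T_n ≤ c a^n` with `a = 2+√3`. -/
theorem stmt11 :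
    gridTreeCount 1 = 1 ∧ gridTreeCount 2 = 4 ∧
    (∀ n : ℕ, 3 ≤ n →
      (gridTreeCount n : ℤ) = 4 * gridTreeCount (n - 1) - gridTreeCount (n - 2)) ∧
    (∀ n : ℕ, 1 ≤ n →
      (gridTreeCount n : ℝ) =
        ((2 + Real.sqrt 3) ^ n - (2 - Real.sqrt 3) ^ n) / (2 * Real.sqrt 3)) ∧
    (∃ c : ℝ, 0 < c ∧ ∀ n : ℕ, 1 ≤ n →
      c * ((2 + Real.sqrt 3) ^ n - 1) ≤ (gridTreeCount n : ℝ) ∧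
      (gridTreeCount n : ℝ) ≤ c * (2 + Real.sqrt 3) ^ n) := by
  refine ⟨gridTreeCount_one, gridTreeCount_two, fun n hn ↦ ?_,
    fun n _ ↦ gridTreeCount_eq_closed_form n, ⟨1 / (2 * √3), by positivity, fun n _ ↦ ?_⟩⟩
  · have := gridTreeCount_add_two_add_self (n - 2)
    rw [show n - 2 + 2 = n by omega, show n - 2 + 1 = n - 1 by omega] at this
    omega
  · have h3 : √3 ^ 2 = 3 := Real.sq_sqrt (by norm_num)
    have hβ₀ : 0 ≤ 2 - √3 := by nlinarith [Real.sqrt_nonneg 3]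
    have hβ₁ : 2 - √3 ≤ 1 := by nlinarith [Real.sqrt_nonneg 3]
    rw [gridTreeCount_eq_closed_form, one_div_mul_eq_div, one_div_mul_eq_div]
    constructor <;> gcongr
    · exact pow_le_one₀ hβ₀ hβ₁
    · exact sub_le_self _ (pow_nonneg hβ₀ n)
end

section
/- If f(z_1,…,z_m, w) is a real stable homogeneous polynomial with nonnegative coefficients, then for each k the sum of terms of degree exactly k in w (with w then set to 1) is again real stable. -/
/-- A real polynomial is real stable if it has no zeros with all variables in the open
upper half-plane. -/
def RealStable {σ : Type*} (f : MvPolynomial σ ℝ) : Prop :=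
  ∀ z : σ → ℂ, (∀ i, 0 < (z i).im) →
    MvPolynomial.eval z (MvPolynomial.map (algebraMap ℝ ℂ) f) ≠ 0

/-!
Multiplying all variables by `i` turns real stability of a homogeneous polynomial into the
half-plane property: no zeros when every variable has positive real part. Let `F(z, w)` be
homogeneous of degree `N` with the half-plane property, and `G_k(z)` its coefficient of `w^k`.

For `x` in the right half-plane, `e ≥ 0` and `0 < c` with `c e_i < Re x_i`, the polynomial
`s ↦ F(x + s e)` has all its roots in `Re s ≤ -c` and its coefficient of `s^N` is `F(e)`,
so `‖F(e)‖ c^N ≤ ‖F(x)‖`. With `x = (u, t)`, `e = (1, t)` and `t → ∞`, this shows that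
`w ↦ F(u, w)` has degree at least that of `w ↦ F(1, w)`, hence at least `k` when
`G_k(1) ≠ 0`; by Gauss–Lucas, `∂_w^k F` has the half-plane property again. With
`x = (u, ε)`, `e = (1, 0)` and `ε → 0`, the same bound for `∂_w^k F` gives
`‖G_k(1)‖ c^(N-k) ≤ ‖G_k(u)‖`, and nonnegative coefficients make `G_k(1) > 0`.
-/

lemma le_of_forall_pos_of_continuous {f g : ℝ → ℝ} (hf : Continuous f) (hg : Continuous g)
    (h : ∀ t, 0 < t → f t ≤ g t) : f 0 ≤ g 0 :=
  ContinuousWithinAt.closure_le (s := Set.Ioi 0) (by simp) hf.continuousWithinAt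
    hg.continuousWithinAt h

lemma Complex.exists_pos_lt_re {ι : Type*} [Finite ι] {u : ι → ℂ}
    (hu : ∀ i, 0 < (u i).re) :
    ∃ c : ℝ, 0 < c ∧ c < 1 ∧ ∀ i, c < (u i).re := by
  obtain ⟨b, hb, hbu⟩ : ∃ b : ℝ, 0 < b ∧ ∀ i, b ≤ (u i).re := by
    rcases isEmpty_or_nonempty ι with hι | hι
    · exact ⟨1, one_pos, fun i => hι.elim i⟩
    · obtain ⟨i₀, hi₀⟩ := Finite.exists_min fun i => (u i).re
      exact ⟨_, hu i₀, hi₀⟩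
  refine ⟨min (1 / 2) (b / 2), by positivity, by linarith [min_le_left (1 / 2 : ℝ) (b / 2)],
    fun i => ?_⟩
  linarith [min_le_right (1 / 2 : ℝ) (b / 2), hbu i]

theorem Finsupp.mapDomain_optionEquivSumPUnit_symm {σ M : Type*} [AddCommMonoid M]
    (d : σ →₀ M) (a : M) :
    mapDomain (Equiv.optionEquivSumPUnit.{0} σ).symm
      (embDomain ⟨Sum.inl, Sum.inl_injective⟩ d + single (Sum.inr ()) a) = d.optionElim a := by
  have he := (Equiv.optionEquivSumPUnit.{0} σ).symm.injective
  ext (_ | i)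
  · refine (mapDomain_apply he _ (Sum.inr ())).trans ?_
    simp [embDomain_of_notMem_range]
  · refine (mapDomain_apply he _ (Sum.inl i)).trans ?_
    rw [optionElim_apply_some, add_apply, single_eq_of_ne (by simp), add_zero]
    exact embDomain_apply_self ⟨Sum.inl, Sum.inl_injective⟩ d i

namespace Polynomial

theorem norm_coeff_mul_pow_le_norm_eval_zero {p : ℂ[X]} {D : ℕ} {c : ℝ} (hc : 0 ≤ c)
    (hD : p.natDegree ≤ D) (hp : ∀ s : ℂ, -c < s.re → p.eval s ≠ 0) :
    ‖p.coeff D‖ * c ^ D ≤ ‖p.eval 0‖ := by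
  rcases hD.lt_or_eq with hlt | rfl
  · simp [coeff_eq_zero_of_natDegree_lt hlt]
  have hsplit : Splits p := IsAlgClosed.splits p
  have hroot (r : ℂ) (hr : r ∈ p.roots) : c ≤ ‖0 - r‖ := by
    have hre : r.re ≤ -c := by
      by_contra! h
      exact hp r h (isRoot_of_mem_roots hr)
    rw [zero_sub, norm_neg]
    linarith [abs_le.mp (Complex.abs_re_le_norm r)]
  have key := Multiset.prod_map_le_prod_map₀ (fun _ => c) _ (fun _ _ => hc) hroot
  rw [Multiset.map_const', Multiset.prod_replicate] at key
  rw [hsplit.eval_eq_prod_roots, ← coeff_natDegree, norm_mul, hsplit.natDegree_eq_card_roots]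
  gcongr
  rwa [← normHom_apply, map_multiset_prod, Multiset.map_map]

theorem natDegree_le_of_forall_pos_norm_eval_le {p q : ℂ[X]} {a : ℝ} (ha : 0 < a)
    (h : ∀ t : ℝ, 0 < t → a * ‖p.eval (t : ℂ)‖ ≤ ‖q.eval (t : ℂ)‖) :
    p.natDegree ≤ q.natDegree := by
  by_contra! hlt
  set n := p.natDegree
  have hreflect (t : ℝ) (ht : 0 < t) :
      a * ‖(reflect n p).eval (t : ℂ)‖ ≤ ‖(reflect n q).eval (t : ℂ)‖ := by
    have hs : ((t⁻¹ : ℝ) : ℂ) ≠ 0 := by exact_mod_cast (inv_pos.2 ht).ne'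
    let _ := invertibleOfNonzero hs
    have hinv : ⅟((t⁻¹ : ℝ) : ℂ) = t := by simp [invOf_eq_inv]
    have hp := eval₂_reflect_mul_pow (RingHom.id ℂ) ((t⁻¹ : ℝ) : ℂ) n p le_rfl
    have hq := eval₂_reflect_mul_pow (RingHom.id ℂ) ((t⁻¹ : ℝ) : ℂ) n q hlt.le
    simp only [hinv, eval₂_id] at hp hq
    have := h t⁻¹ (inv_pos.2 ht)
    rw [← hp, ← hq, norm_mul, norm_mul, ← mul_assoc] at this
    exact le_of_mul_le_mul_right this (norm_pos_iff.2 (pow_ne_zero _ hs))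
  have h0 := le_of_forall_pos_of_continuous (by fun_prop) (by fun_prop) hreflect
  simp only [Complex.ofReal_zero, ← coeff_zero_eq_eval_zero, coeff_reflect,
    revAt_le (Nat.zero_le n), Nat.sub_zero, coeff_eq_zero_of_natDegree_lt hlt, norm_zero] at h0
  have : p ≠ 0 := by rintro rfl; simp [n] at hlt
  exact (mul_pos ha (norm_pos_iff.2 (leadingCoeff_ne_zero.2 this))).not_ge h0

theorem eval_derivative_ne_zero_of_re_pos {p : ℂ[X]} (hp : p.natDegree ≠ 0)
    (h : ∀ w : ℂ, 0 < w.re → p.eval w ≠ 0) (w : ℂ) (hw : 0 < w.re) :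
    (derivative p).eval w ≠ 0 := by
  intro hw0
  have hmem : w ∈ (derivative p).rootSet ℂ := by
    rw [mem_rootSet]
    exact ⟨fun h0 => hp (derivative_eq_zero.1 h0), by simpa using hw0⟩
  have hroots : p.rootSet ℂ ⊆ {z : ℂ | z.re ≤ 0} := by
    intro r hr
    rw [mem_rootSet] at hr
    by_contra hre
    exact h r (not_le.1 hre) (by simpa using hr.2)
  have := convexHull_min hroots (convex_halfSpace_re_le 0)
    (rootSet_derivative_subset_convexHull_rootSet
      (natDegree_pos_iff_degree_pos.1 (Nat.pos_of_ne_zero hp)) hmem)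
  exact (not_le.2 hw) this

theorem eval_iterate_derivative_ne_zero_of_re_pos {p : ℂ[X]} {k : ℕ} (hk : k ≤ p.natDegree)
    (h : ∀ w : ℂ, 0 < w.re → p.eval w ≠ 0) (w : ℂ) (hw : 0 < w.re) :
    (derivative^[k] p).eval w ≠ 0 := by
  induction k generalizing p with
  | zero => exact h w hw
  | succ k ih =>
    rw [Function.iterate_succ_apply]
    exact ih (by rw [natDegree_derivative]; omega)
      (eval_derivative_ne_zero_of_re_pos (by omega) h)

theorem natDegree_prod_pow_le_and_coeff {ι R : Type*} [CommSemiring R] (s : Finset ι)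
    (f : ι → R[X]) (n : ι → ℕ) (hf : ∀ i ∈ s, (f i).natDegree ≤ 1) :
    (∏ i ∈ s, f i ^ n i).natDegree ≤ ∑ i ∈ s, n i ∧
      (∏ i ∈ s, f i ^ n i).coeff (∑ i ∈ s, n i) = ∏ i ∈ s, (f i).coeff 1 ^ n i := by
  classical
  induction s using Finset.induction_on with
  | empty => simp
  | insert i s hi ih =>
    obtain ⟨hdeg, hcoeff⟩ := ih fun j hj => hf j (Finset.mem_insert_of_mem hj)
    have hfi := hf i (Finset.mem_insert_self i s)
    have hpow : (f i ^ n i).natDegree ≤ n i := natDegree_pow_le_of_le _ hfi |>.trans (by simp)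
    rw [Finset.prod_insert hi, Finset.sum_insert hi, Finset.prod_insert hi]
    refine ⟨natDegree_mul_le_of_le hpow hdeg, ?_⟩
    rw [coeff_mul_add_eq_of_natDegree_le hpow hdeg, hcoeff, ← coeff_pow_of_natDegree_le hfi,
      mul_one]

end Polynomial

namespace MvPolynomial

open Polynomial (natDegree_linear_le natDegree_C_mul_le natDegree_sum_le_of_forall_le
  finsetSum_coeff)

variable {ι σ R : Type*}

theorem IsHomogeneous.eval_const_mul [CommSemiring R] {P : MvPolynomial ι R} {n : ℕ}
    (hP : P.IsHomogeneous n) (c : R) (x : ι → R) :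
    eval (fun i => c * x i) P = c ^ n * eval x P := by
  simp only [eval_eq, Finset.mul_sum]
  refine Finset.sum_congr rfl fun d hd => ?_
  simp only [mul_pow, Finset.prod_mul_distrib, Finset.prod_pow_eq_pow_sum,
    ← hP.degree_eq_sum_deg_support hd]
  ring

theorem IsHomogeneous.iterate_pderiv [CommSemiring R] {P : MvPolynomial ι R} {n : ℕ}
    (hP : P.IsHomogeneous n) (i : ι) (k : ℕ) :
    ((pderiv i)^[k] P).IsHomogeneous (n - k) := by
  induction k with
  | zero => simpa using hP
  | succ k ih => simpa [Function.iterate_succ_apply', Nat.sub_sub] using ih.pderiv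

theorem IsHomogeneous.natDegree_aeval_linear_le_and_coeff [CommRing R] {P : MvPolynomial ι R}
    {D : ℕ} (hP : P.IsHomogeneous D) (x e : ι → R) :
    (MvPolynomial.aeval (fun i => Polynomial.C (e i) * Polynomial.X + Polynomial.C (x i))
        P).natDegree ≤ D ∧
      (MvPolynomial.aeval (fun i => Polynomial.C (e i) * Polynomial.X + Polynomial.C (x i))
        P).coeff D = eval e P := by
  have hmon (d : ι →₀ ℕ) (hd : d ∈ P.support) := by
    have := Polynomial.natDegree_prod_pow_le_and_coeff d.support
      (fun i => Polynomial.C (e i) * Polynomial.X + Polynomial.C (x i)) d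
      (fun _ _ => natDegree_linear_le)
    rwa [← hP.degree_eq_sum_deg_support hd] at this
  rw [aeval_def, eval₂_eq, eval_eq, finsetSum_coeff]
  refine ⟨natDegree_sum_le_of_forall_le _ _ fun d hd => ?_, Finset.sum_congr rfl fun d hd => ?_⟩
  · exact natDegree_C_mul_le _ _ |>.trans (hmon d hd).1
  · simp [Polynomial.coeff_C_mul, (hmon d hd).2]

theorem IsHomogeneous.coeff_optionEquivLeft [CommSemiring R] [Finite σ]
    {F : MvPolynomial (Option σ) R} {N k : ℕ} (hF : F.IsHomogeneous N)
    (hk : (optionEquivLeft R σ F).coeff k ≠ 0) :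
    ((optionEquivLeft R σ F).coeff k).IsHomogeneous (N - k) := by
  have hkN : k ≤ N := (Polynomial.le_natDegree_of_ne_zero hk).trans <| by
    rw [natDegree_optionEquivLeft]
    exact (degreeOf_le_totalDegree _ _).trans hF.totalDegree_le
  exact coeff_isHomogeneous_of_optionEquivLeft_symm (by simpa using hF) k (N - k) (by omega)

theorem coeff_coeff_optionEquivLeft_rename [CommSemiring R] (P : MvPolynomial (σ ⊕ Unit) R)
    (k : ℕ) (d : σ →₀ ℕ) :
    coeff d ((optionEquivLeft R σ (rename (Equiv.optionEquivSumPUnit.{0} σ).symm P)).coeff k) =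
      P.coeff (Finsupp.embDomain ⟨Sum.inl, Sum.inl_injective⟩ d +
        Finsupp.single (Sum.inr ()) k) := by
  rw [optionEquivLeft_coeff_coeff, ← Finsupp.mapDomain_optionEquivSumPUnit_symm,
    coeff_rename_mapDomain _ (Equiv.injective _)]

theorem eval_one_pos_of_coeff_nonneg {g : MvPolynomial σ ℝ} (hg : g ≠ 0)
    (h : ∀ d, 0 ≤ g.coeff d) : 0 < eval 1 g := by
  obtain ⟨d, hd⟩ := support_nonempty.2 hg
  simp only [eval_eq, Pi.one_apply, one_pow, Finset.prod_const_one, mul_one]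
  exact Finset.sum_pos' (fun d _ => h d) ⟨d, hd, (h d).lt_of_ne' (mem_support_iff.1 hd)⟩

section OptionEquivLeft

open Polynomial (derivative iterate_derivative_map)

variable [CommSemiring R]

theorem optionEquivLeft_pderiv_none (F : MvPolynomial (Option σ) R) :
    optionEquivLeft R σ (pderiv none F) = derivative (optionEquivLeft R σ F) := by
  induction F using MvPolynomial.induction_on with
  | C a => simp
  | add p q hp hq => simp [hp, hq]
  | mul_X p o h =>
    cases o <;> simp [h, optionEquivLeft_X_some, optionEquivLeft_X_none, mul_comm]

theorem optionEquivLeft_iterate_pderiv_none (F : MvPolynomial (Option σ) R) (k : ℕ) :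
    optionEquivLeft R σ ((pderiv none)^[k] F) = derivative^[k] (optionEquivLeft R σ F) := by
  induction k with
  | zero => rfl
  | succ k ih =>
    rw [Function.iterate_succ_apply', Function.iterate_succ_apply', optionEquivLeft_pderiv_none, ih]

/-- The polynomial `w ↦ F(u, w)`, where `w` is the variable `none`. -/
noncomputable def evalSome (u : σ → R) (F : MvPolynomial (Option σ) R) : Polynomial R :=
  (optionEquivLeft R σ F).map (eval u)

theorem eval_evalSome (u : σ → R) (F : MvPolynomial (Option σ) R) (w : R) :
    (evalSome u F).eval w = eval (fun o => o.elim w u) F :=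
  (optionEquivLeft_elim_eval R σ u w F).symm

theorem coeff_evalSome (u : σ → R) (F : MvPolynomial (Option σ) R) (j : ℕ) :
    (evalSome u F).coeff j = eval u ((optionEquivLeft R σ F).coeff j) :=
  Polynomial.coeff_map _ _

theorem evalSome_iterate_pderiv_none (u : σ → R) (F : MvPolynomial (Option σ) R) (k : ℕ) :
    evalSome u ((pderiv none)^[k] F) = derivative^[k] (evalSome u F) := by
  rw [evalSome, evalSome, optionEquivLeft_iterate_pderiv_none, iterate_derivative_map]

end OptionEquivLeft

def HalfPlaneProperty (P : MvPolynomial ι ℂ) : Prop :=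
  ∀ x : ι → ℂ, (∀ i, 0 < (x i).re) → eval x P ≠ 0

theorem realStable_iff_halfPlaneProperty {f : MvPolynomial ι ℝ} {n : ℕ}
    (hf : f.IsHomogeneous n) : RealStable f ↔ HalfPlaneProperty (map (algebraMap ℝ ℂ) f) := by
  have hrot := (hf.map (algebraMap ℝ ℂ)).eval_const_mul Complex.I
  constructor
  · intro hst x hx
    have := hst (fun i => Complex.I * x i) (by simpa using hx)
    rw [hrot] at this
    exact right_ne_zero_of_mul this
  · intro hH z hz
    have hz' : z = fun i => Complex.I * (-Complex.I * z i) := by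
      ext1 i
      rw [← mul_assoc, ← neg_mul_eq_mul_neg, Complex.I_mul_I, neg_neg, one_mul]
    rw [hz', hrot]
    exact mul_ne_zero (pow_ne_zero _ Complex.I_ne_zero) (hH _ (by simpa using hz))

namespace HalfPlaneProperty

open Polynomial (natDegree_le_of_forall_pos_norm_eval_le norm_coeff_mul_pow_le_norm_eval_zero
  eval_iterate_derivative_ne_zero_of_re_pos coeff_zero_eq_eval_zero coeff_iterate_derivative)

theorem rename {P : MvPolynomial ι ℂ} (hP : HalfPlaneProperty P) (f : ι → σ) :
    HalfPlaneProperty (rename f P) := fun x hx => by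
  rw [eval_rename]
  exact hP _ fun i => hx (f i)

theorem norm_eval_mul_pow_le {P : MvPolynomial ι ℂ} {D : ℕ} (hP : P.IsHomogeneous D)
    (hH : HalfPlaneProperty P) {x : ι → ℂ} {e : ι → ℝ} {c : ℝ} (hc : 0 ≤ c)
    (he : ∀ i, 0 ≤ e i) (hxe : ∀ i, c * e i < (x i).re) :
    ‖eval (fun i => (e i : ℂ)) P‖ * c ^ D ≤ ‖eval x P‖ := by
  obtain ⟨hdeg, hcoeff⟩ := hP.natDegree_aeval_linear_le_and_coeff x (fun i => (e i : ℂ))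
  set ψ := MvPolynomial.aeval
    (fun i => Polynomial.C (e i : ℂ) * Polynomial.X + Polynomial.C (x i)) P
  have heval (s : ℂ) : ψ.eval s = eval (fun i => e i * s + x i) P := by
    rw [← Polynomial.coe_aeval_eq_eval, ← AlgHom.comp_apply, MvPolynomial.comp_aeval]
    simp
  have := norm_coeff_mul_pow_le_norm_eval_zero hc hdeg fun s hs => by
    rw [heval]
    refine hH _ fun i => ?_
    simp only [Complex.add_re, Complex.re_ofReal_mul]
    nlinarith [he i, hxe i]
  simpa [hcoeff, heval] using this

variable [Finite σ] {F : MvPolynomial (Option σ) ℂ} {N : ℕ}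

theorem natDegree_evalSome_one_le (hF : F.IsHomogeneous N) (hH : HalfPlaneProperty F)
    {u : σ → ℂ} (hu : ∀ i, 0 < (u i).re) :
    (evalSome 1 F).natDegree ≤ (evalSome u F).natDegree := by
  obtain ⟨c, hc0, hc1, hcu⟩ := Complex.exists_pos_lt_re hu
  refine natDegree_le_of_forall_pos_norm_eval_le (pow_pos hc0 N) fun t ht => ?_
  have := hH.norm_eval_mul_pow_le hF (x := fun o => o.elim (t : ℂ) u) (e := fun o => o.elim t 1)
    hc0.le (by rintro (_ | _) <;> simp [ht.le]) (by rintro (_ | i) <;> simp [hcu, ht, hc1])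
  have he : (fun o : Option σ => ((o.elim t 1 : ℝ) : ℂ)) = fun o => o.elim (t : ℂ) 1 := by
    ext1 (_ | _) <;> simp
  rw [eval_evalSome, eval_evalSome, mul_comm]
  simpa [he] using this

theorem iterate_pderiv_none (hF : F.IsHomogeneous N) (hH : HalfPlaneProperty F) {k : ℕ}
    (hk : k ≤ (evalSome 1 F).natDegree) : HalfPlaneProperty ((pderiv none)^[k] F) := by
  intro y hy
  have hu : ∀ i, 0 < (y (some i)).re := fun i => hy _
  have hy' : y = fun o => o.elim (y none) fun i => y (some i) := by ext1 (_ | _) <;> rfl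
  rw [hy', ← eval_evalSome, evalSome_iterate_pderiv_none]
  refine eval_iterate_derivative_ne_zero_of_re_pos (hk.trans (hH.natDegree_evalSome_one_le hF hu))
    (fun w hw => ?_) _ (hy none)
  rw [eval_evalSome]
  exact hH _ (by rintro (_ | i) <;> simp [hw, hu])

theorem optionEquivLeft_coeff_zero (hF : F.IsHomogeneous N) (hH : HalfPlaneProperty F)
    (h1 : eval 1 ((optionEquivLeft ℂ σ F).coeff 0) ≠ 0) :
    HalfPlaneProperty ((optionEquivLeft ℂ σ F).coeff 0) := by
  intro u hu hu0
  obtain ⟨c, hc0, -, hcu⟩ := Complex.exists_pos_lt_re hu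
  have hbound (ε : ℝ) (hε : 0 < ε) :
      ‖(evalSome 1 F).eval 0‖ * c ^ N ≤ ‖(evalSome u F).eval (ε : ℂ)‖ := by
    have := hH.norm_eval_mul_pow_le hF (x := fun o => o.elim (ε : ℂ) u)
      (e := fun o => o.elim 0 1)
      hc0.le (by rintro (_ | _) <;> simp) (by rintro (_ | i) <;> simp [hcu, hε])
    have he : (fun o : Option σ => ((o.elim 0 1 : ℝ) : ℂ)) = fun o => o.elim 0 1 := by
      ext1 (_ | _) <;> simp
    rw [eval_evalSome, eval_evalSome]
    simpa [he] using this
  have := le_of_forall_pos_of_continuous continuous_const (by fun_prop) hbound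
  rw [Complex.ofReal_zero, ← coeff_zero_eq_eval_zero, ← coeff_zero_eq_eval_zero, coeff_evalSome,
    coeff_evalSome, hu0, norm_zero] at this
  exact (mul_pos (norm_pos_iff.2 h1) (pow_pos hc0 N)).not_ge this

theorem optionEquivLeft_coeff (hF : F.IsHomogeneous N) (hH : HalfPlaneProperty F) {k : ℕ}
    (hk : eval 1 ((optionEquivLeft ℂ σ F).coeff k) ≠ 0) :
    HalfPlaneProperty ((optionEquivLeft ℂ σ F).coeff k) := by
  have hcoeff : (optionEquivLeft ℂ σ ((pderiv none)^[k] F)).coeff 0 =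
      (k.factorial : ℂ) • (optionEquivLeft ℂ σ F).coeff k := by
    rw [optionEquivLeft_iterate_pderiv_none, coeff_iterate_derivative, zero_add,
      Nat.descFactorial_self, Nat.cast_smul_eq_nsmul]
  have hk₀ : (k.factorial : ℂ) ≠ 0 := by exact_mod_cast k.factorial_ne_zero
  have hderiv := hH.iterate_pderiv_none hF (Polynomial.le_natDegree_of_ne_zero <| by
    rwa [coeff_evalSome])
  have hQ := hderiv.optionEquivLeft_coeff_zero (hF.iterate_pderiv none k) <| by
    rw [hcoeff, smul_eval]
    exact mul_ne_zero hk₀ hk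
  intro u hu h0
  exact hQ u hu (by rw [hcoeff, smul_eval, h0, mul_zero])

end HalfPlaneProperty

end MvPolynomial

open MvPolynomial in
/-- if `f(z_1, …, z_m, w)` is a homogeneous real stable polynomial with
nonnegative coefficients, then for each `k` the sum of the terms of degree exactly `k` in
`w`, with `w` then set to `1` (i.e. the polynomial `g` with
`g.coeff d = f.coeff (d, k)`), is again real stable (or identically zero). -/
theorem stmt18 (m : ℕ) (f : MvPolynomial (Fin m ⊕ Unit) ℝ) (N : ℕ)
    (hhom : f.IsHomogeneous N) (hnn : ∀ d, 0 ≤ f.coeff d) (hst : RealStable f)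
    (k : ℕ) (g : MvPolynomial (Fin m) ℝ)
    (hg : ∀ d : Fin m →₀ ℕ, g.coeff d =
      f.coeff (Finsupp.embDomain ⟨Sum.inl, Sum.inl_injective⟩ d +
        Finsupp.single (Sum.inr ()) k)) :
    g = 0 ∨ RealStable g := by
  rcases eq_or_ne g 0 with rfl | hg0
  · exact Or.inl rfl
  right
  set F := rename (Equiv.optionEquivSumPUnit.{0} (Fin m)).symm (map (algebraMap ℝ ℂ) f)
  have hF : F.IsHomogeneous N := (hhom.map _).rename_isHomogeneous
  have hG : (optionEquivLeft ℂ (Fin m) F).coeff k = map (algebraMap ℝ ℂ) g := by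
    ext d
    rw [coeff_coeff_optionEquivLeft_rename, coeff_map, coeff_map, hg]
  have hg1 : eval 1 (map (algebraMap ℝ ℂ) g) ≠ 0 := by
    rw [show (1 : Fin m → ℂ) = algebraMap ℝ ℂ ∘ (1 : Fin m → ℝ) by ext; simp,
      ← map_eval]
    exact (map_ne_zero _).2 (eval_one_pos_of_coeff_nonneg hg0 fun d => hg d ▸ hnn _).ne'
  have hghom : g.IsHomogeneous (N - k) := IsHomogeneous.of_map (algebraMap ℝ ℂ).injective <|
    hG ▸ hF.coeff_optionEquivLeft (hG ▸ fun h => hg1 (by rw [h, map_zero]))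
  refine (realStable_iff_halfPlaneProperty hghom).2 (hG ▸ ?_)
  exact ((realStable_iff_halfPlaneProperty hhom).1 hst |>.rename _).optionEquivLeft_coeff hF
    (hG ▸ hg1)
end
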